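/- arXiv:2403.19118 — 11 statements merged into one kernel-verified Lean document; each statement's English description precedes it below -/
import Mathlib

section
/- Let 𝓗 be a finite-dimensional complex inner product space, let H : ℝ → (𝓗 →L[ℂ] 𝓗) be continuous with each H(t) self-adjoint, and let U : ℝ → (𝓗 →L[ℂ] 𝓗) be differentiable with U(0) = 1, U(t) unitary for every t, and i·U′(t) = H(t) ∘ U(t). For a self-adjoint operator X₀ on 𝓗, the curve X(t) := U(t)⁻¹ ∘ X₀ ∘ U(t) is the unique differentiable operator-valued curve satisfying the Heisenberg equation i·(d/dt)X(t) = X(t) ∘ H̃(t) − H̃(t) ∘ X(t) with X(0) = X₀, where H̃(t) := U(t)⁻¹ ∘ H(t) ∘ U(t). -/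
/-! With `V = U† = U⁻¹`, differentiating `V U = 1` gives `V' = -V U' V`, and the Schrödinger
equation gives `H̃ = V (H U) = i V U'`, so the Heisenberg equation becomes
`Y' = Y (V U') - (V U') Y`. The conjugate `V X₀ U` solves it by the product rule, and for any solution `Y` the curve
`U Y V` has derivative zero, hence stays equal to `X₀`. -/

section InverseCurves

variable {A : Type*} [NormedRing A] [NormedAlgebra ℝ A] {U V U' V' : ℝ → A}

theorem eq_neg_mul_mul_of_hasDerivAt_inverse {t : ℝ} (hU : HasDerivAt U (U' t) t)
    (hV : HasDerivAt V (V' t) t) (hVU : ∀ s, V s * U s = 1) (hUV : U t * V t = 1) :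
    V' t = -(V t * U' t * V t) := by
  have hconst : HasDerivAt (fun s => V s * U s) 0 t := by
    simpa only [hVU] using hasDerivAt_const t (1 : A)
  have hsum : V' t * U t + V t * U' t = 0 := (hV.fun_mul hU).unique hconst
  calc V' t = (V' t * U t + V t * U' t) * V t - V t * U' t * V t := by
        rw [add_mul, mul_assoc, hUV, mul_one, add_sub_cancel_right]
    _ = -(V t * U' t * V t) := by rw [hsum, zero_mul, zero_sub]

variable (hU : ∀ t, HasDerivAt U (U' t) t) (hV : ∀ t, HasDerivAt V (V' t) t)
  (hVU : ∀ t, V t * U t = 1) (hUV : ∀ t, U t * V t = 1)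
include hU hV hVU hUV

theorem hasDerivAt_conj (X₀ : A) (t : ℝ) :
    HasDerivAt (fun s => V s * X₀ * U s)
      (V t * X₀ * U t * (V t * U' t) - V t * U' t * (V t * X₀ * U t)) t := by
  refine (((hV t).mul_const X₀).fun_mul (hU t)).congr_deriv ?_
  have cancel (B : A) : U t * (V t * B) = B := by rw [← mul_assoc, hUV, one_mul]
  rw [eq_neg_mul_mul_of_hasDerivAt_inverse (hU t) (hV t) hVU (hUV t)]
  simp only [neg_mul, mul_assoc, cancel]
  abel

theorem hasDerivAt_conj_zero_of_commutator {Y Y' : ℝ → A} (hY : ∀ t, HasDerivAt Y (Y' t) t)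
    (hY' : ∀ t, Y' t = Y t * (V t * U' t) - V t * U' t * Y t) (t : ℝ) :
    HasDerivAt (fun s => U s * Y s * V s) 0 t := by
  refine (((hU t).fun_mul (hY t)).fun_mul (hV t)).congr_deriv ?_
  have cancel (B : A) : U t * (V t * B) = B := by rw [← mul_assoc, hUV, one_mul]
  rw [eq_neg_mul_mul_of_hasDerivAt_inverse (hU t) (hV t) hVU (hUV t), hY' t]
  simp only [add_mul, sub_mul, mul_sub, mul_neg, mul_assoc, cancel]
  abel

theorem eq_conj_of_commutator {Y Y' : ℝ → A} (hY : ∀ t, HasDerivAt Y (Y' t) t)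
    (hY' : ∀ t, Y' t = Y t * (V t * U' t) - V t * U' t * Y t) (t : ℝ) :
    Y t = V t * (U 0 * Y 0 * V 0) * U t := by
  have hW := hasDerivAt_conj_zero_of_commutator hU hV hVU hUV hY hY'
  have hconst : U t * Y t * V t = U 0 * Y 0 * V 0 :=
    is_const_of_deriv_eq_zero (fun s => (hW s).differentiableAt) (fun s => (hW s).deriv) t 0
  rw [← hconst]
  simp only [← mul_assoc, hVU, one_mul]
  simp only [mul_assoc, hVU, mul_one]

end InverseCurves

open ContinuousLinearMap in
theorem heisenberg_equation_unique_general
    {𝓗 : Type*} [NormedAddCommGroup 𝓗] [InnerProductSpace ℂ 𝓗] [FiniteDimensional ℂ 𝓗]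
    (Ham : ℝ → 𝓗 →L[ℂ] 𝓗)
    (U U' : ℝ → 𝓗 →L[ℂ] 𝓗)
    (hU0 : U 0 = 1)
    (hUuni : ∀ t, adjoint (U t) ∘L U t = 1 ∧ U t ∘L adjoint (U t) = 1)
    (hUderiv : ∀ t, HasDerivAt U (U' t) t)
    (hSch : ∀ t, Complex.I • U' t = Ham t ∘L U t)
    (X₀ : 𝓗 →L[ℂ] 𝓗)
    (X : ℝ → 𝓗 →L[ℂ] 𝓗) (hX : ∀ t, X t = adjoint (U t) ∘L X₀ ∘L U t)
    (Htilde : ℝ → 𝓗 →L[ℂ] 𝓗) (hHt : ∀ t, Htilde t = adjoint (U t) ∘L Ham t ∘L U t) :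
    (X 0 = X₀ ∧ ∀ t, ∃ D : 𝓗 →L[ℂ] 𝓗, HasDerivAt X D t ∧
        Complex.I • D = X t ∘L Htilde t - Htilde t ∘L X t) ∧
    (∀ Y Y' : ℝ → 𝓗 →L[ℂ] 𝓗, Y 0 = X₀ →
      (∀ t, HasDerivAt Y (Y' t) t) →
      (∀ t, Complex.I • Y' t = Y t ∘L Htilde t - Htilde t ∘L Y t) →
      ∀ t, Y t = X t) := by
  set V : ℝ → 𝓗 →L[ℂ] 𝓗 := fun t => adjoint (U t)
  have hV (t : ℝ) : HasDerivAt V (star (U' t)) t := (hUderiv t).star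
  have hVU (t : ℝ) : V t * U t = 1 := (hUuni t).1
  have hUV (t : ℝ) : U t * V t = 1 := (hUuni t).2
  have hV0 : V 0 = 1 := by simp [V, hU0]
  have hXconj : X = fun s => V s * X₀ * U s :=
    funext fun s => (hX s).trans (mul_assoc _ _ _).symm
  have hHtilde (t : ℝ) : Htilde t = Complex.I • (V t * U' t) := by
    rw [hHt, ← hSch]
    exact mul_smul_comm _ _ _
  have hcomm (Y : ℝ → 𝓗 →L[ℂ] 𝓗) (t : ℝ) : Y t * Htilde t - Htilde t * Y t =
      Complex.I • (Y t * (V t * U' t) - V t * U' t * Y t) := by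
    rw [hHtilde, smul_sub, mul_smul_comm, smul_mul_assoc]
  refine ⟨⟨by simp [hXconj, hV0, hU0], fun t => ?_⟩, fun Y Y' hY0 hY hYeq t => ?_⟩
  · refine ⟨_, hXconj ▸ hasDerivAt_conj hUderiv hV hVU hUV X₀ t, ?_⟩
    show _ = X t * Htilde t - Htilde t * X t
    rw [hcomm, hXconj]
  · have hY' (s : ℝ) : Y' s = Y s * (V s * U' s) - V s * U' s * Y s :=
      smul_right_injective _ Complex.I_ne_zero ((hYeq s).trans (hcomm Y s))
    rw [eq_conj_of_commutator hUderiv hV hVU hUV hY hY' t, hY0, hU0, hV0, hXconj,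
      one_mul, mul_one]

open ContinuousLinearMap in
/-- The Heisenberg equation: `X(t) := U(t)⁻¹ ∘ X₀ ∘ U(t)` is the unique solution with
`X(0) = X₀` of `i·X′(t) = [X(t), H̃(t)]`, where `H̃(t) = U(t)⁻¹ ∘ H(t) ∘ U(t)`. -/
theorem heisenberg_equation_unique
    {𝓗 : Type*} [NormedAddCommGroup 𝓗] [InnerProductSpace ℂ 𝓗] [FiniteDimensional ℂ 𝓗]
    (Ham : ℝ → 𝓗 →L[ℂ] 𝓗) (hHcont : Continuous Ham)
    (hHsa : ∀ t, IsSelfAdjoint (Ham t))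
    (U U' : ℝ → 𝓗 →L[ℂ] 𝓗)
    (hU0 : U 0 = 1)
    (hUuni : ∀ t, adjoint (U t) ∘L U t = 1 ∧ U t ∘L adjoint (U t) = 1)
    (hUderiv : ∀ t, HasDerivAt U (U' t) t)
    (hSch : ∀ t, Complex.I • U' t = Ham t ∘L U t)
    (X₀ : 𝓗 →L[ℂ] 𝓗) (hX₀ : IsSelfAdjoint X₀)
    (X : ℝ → 𝓗 →L[ℂ] 𝓗) (hX : ∀ t, X t = adjoint (U t) ∘L X₀ ∘L U t)
    (Htilde : ℝ → 𝓗 →L[ℂ] 𝓗) (hHt : ∀ t, Htilde t = adjoint (U t) ∘L Ham t ∘L U t) :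
    (X 0 = X₀ ∧ ∀ t, ∃ D : 𝓗 →L[ℂ] 𝓗, HasDerivAt X D t ∧
        Complex.I • D = X t ∘L Htilde t - Htilde t ∘L X t) ∧
    (∀ Y Y' : ℝ → 𝓗 →L[ℂ] 𝓗, Y 0 = X₀ →
      (∀ t, HasDerivAt Y (Y' t) t) →
      (∀ t, Complex.I • Y' t = Y t ∘L Htilde t - Htilde t ∘L Y t) →
      ∀ t, Y t = X t) :=
  heisenberg_equation_unique_general Ham U U' hU0 hUuni hUderiv hSch X₀ X hX Htilde hHt
end

section
/- Let C : ℝ → Matrix (Fin m) (Fin m) ℂ be continuous with C(t) Hermitian (C(t)* = C(t)) for every t, and let V : ℝ → Matrix (Fin m) (Fin m) ℂ be differentiable with V(0) = 1 and i·V′(t) = C(t) · V(t) for all t. Then V(t) is a unitary matrix for every t. -/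
/-!
The Gram matrix `Vᴴ V` has derivative `V'ᴴ V + Vᴴ V' = i Vᴴ Cᴴ V - i Vᴴ C V`, which vanishes
because `C` is Hermitian. Hence `Vᴴ V` stays equal to `V(0)ᴴ V(0) = 1`, and for square
matrices a left inverse is also a right inverse.
-/

open Matrix

section EntrywiseCalculus

variable {𝕜 𝔸 : Type*} [NontriviallyNormedField 𝕜] [NormedCommRing 𝔸] [NormedAlgebra 𝕜 𝔸]
  {l m n : Type*} {t : 𝕜}

theorem Matrix.hasDerivAt_mul_apply [Fintype m] {A : 𝕜 → Matrix l m 𝔸} {B : 𝕜 → Matrix m n 𝔸}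
    {A' : Matrix l m 𝔸} {B' : Matrix m n 𝔸}
    (hA : ∀ i j, HasDerivAt (fun s => A s i j) (A' i j) t)
    (hB : ∀ i j, HasDerivAt (fun s => B s i j) (B' i j) t) (i : l) (k : n) :
    HasDerivAt (fun s => (A s * B s) i k) ((A' * B t + A t * B') i k) t := by
  simp only [mul_apply, add_apply, ← Finset.sum_add_distrib]
  exact HasDerivAt.fun_sum fun j _ => (hA i j).mul (hB j k)

theorem Matrix.hasDerivAt_conjTranspose_apply [StarRing 𝕜] [TrivialStar 𝕜] [StarRing 𝔸]
    [ContinuousStar 𝔸] [StarModule 𝕜 𝔸] {A : 𝕜 → Matrix m n 𝔸} {A' : Matrix m n 𝔸}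
    (hA : ∀ i j, HasDerivAt (fun s => A s i j) (A' i j) t) (i : n) (j : m) :
    HasDerivAt (fun s => (A s)ᴴ i j) (A'ᴴ i j) t :=
  (hA j i).star

end EntrywiseCalculus

theorem Matrix.eq_of_forall_hasDerivAt_apply_zero {𝕜 E m n : Type*} [RCLike 𝕜]
    [NormedAddCommGroup E] [NormedSpace 𝕜 E] {F : 𝕜 → Matrix m n E}
    (hF : ∀ s i j, HasDerivAt (fun s => F s i j) 0 s) (t₀ t : 𝕜) : F t = F t₀ := by
  ext i j
  exact is_const_of_deriv_eq_zero (fun s => (hF s i j).differentiableAt)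
    (fun s => (hF s i j).deriv) t t₀

theorem Matrix.conjTranspose_mul_add_eq_zero_of_I_smul_eq {m n : Type*} [Fintype m]
    {H : Matrix m m ℂ} {V V' : Matrix m n ℂ} (hH : Hᴴ = H) (hV : Complex.I • V' = H * V) :
    V'ᴴ * V + Vᴴ * V' = 0 := by
  have hV' : V' = -Complex.I • (H * V) := by
    rw [← hV, smul_smul]; simp
  rw [hV', conjTranspose_smul, conjTranspose_mul, hH]
  simp [Matrix.mul_assoc]

theorem ode_solution_unitary_general
    (m : ℕ) (C : ℝ → Matrix (Fin m) (Fin m) ℂ)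
    (hCherm : ∀ t, (C t)ᴴ = C t)
    (V V' : ℝ → Matrix (Fin m) (Fin m) ℂ)
    (hV0 : V 0 = 1)
    (hVderiv : ∀ t p k, HasDerivAt (fun s => V s p k) (V' t p k) t)
    (hVode : ∀ t, Complex.I • V' t = C t * V t) :
    ∀ t, (V t)ᴴ * V t = 1 ∧ V t * (V t)ᴴ = 1 := by
  have hGram : ∀ s p k, HasDerivAt (fun s => ((V s)ᴴ * V s) p k) 0 s := fun s p k => by
    have h := hasDerivAt_mul_apply (hasDerivAt_conjTranspose_apply (hVderiv s)) (hVderiv s) p k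
    rwa [conjTranspose_mul_add_eq_zero_of_I_smul_eq (hCherm s) (hVode s), Matrix.zero_apply] at h
  intro t
  have hunit : (V t)ᴴ * V t = 1 := by
    rw [eq_of_forall_hasDerivAt_apply_zero hGram 0 t, hV0, conjTranspose_one, one_mul]
  exact ⟨hunit, mul_eq_one_comm.mp hunit⟩

/-- The solution of `i·V′(t) = C(t)·V(t)`, `V(0) = 1`, with `C(t)` Hermitian, is unitary
for every `t`. Differentiability is entrywise. -/
theorem ode_solution_unitary
    (m : ℕ) (C : ℝ → Matrix (Fin m) (Fin m) ℂ)
    (hCcont : ∀ p k, Continuous fun t => C t p k)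
    (hCherm : ∀ t, (C t)ᴴ = C t)
    (V V' : ℝ → Matrix (Fin m) (Fin m) ℂ)
    (hV0 : V 0 = 1)
    (hVderiv : ∀ t p k, HasDerivAt (fun s => V s p k) (V' t p k) t)
    (hVode : ∀ t, Complex.I • V' t = C t * V t) :
    ∀ t, (V t)ᴴ * V t = 1 ∧ V t * (V t)ᴴ = 1 :=
  ode_solution_unitary_general m C hCherm V V' hV0 hVderiv hVode
end

section
/- Under the hypotheses of Proposition 2.1 (U differentiable unitary-valued with U(0)=1 and i·U′(t) = H(t)∘U(t) for continuous self-adjoint-valued H; ψ₁,…,ψ_m orthonormal; ψ_k(t) := U(t)⁻¹ψ_k; Ṽ the solution of i·Ṽ′ = C·Ṽ, Ṽ(0)=1 with C(t)_{pk} = ⟨ψ_p, H(t)ψ_k⟩; ψ̃_k(t) := Σ_p Ṽ(t)_{pk}·ψ_p(t)), one has ⟨ψ_p(t), (d/dt)ψ̃_k(t)⟩ = 0 for all 1 ≤ p, k ≤ m and all t. -/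
/-! Write `ψ_q(t) = U(t)†ψ_q`. Taking adjoints in `i U' = H U` with `H` self-adjoint gives
`(U')† = i U† H`, so, `U` being unitary, `⟨ψ_p(t), (U')†ψ_q⟩ = i C_pq(t)` while
`⟨ψ_p(t), ψ_q(t)⟩ = δ_pq`. Hence `⟨ψ_p(t), ψ̃_k'(t)⟩ = i (C Ṽ)_pk + Ṽ'_pk`, which vanishes
because `i Ṽ' = C Ṽ`. -/

open Complex

namespace ContinuousLinearMap

variable {𝓗 : Type*} [NormedAddCommGroup 𝓗] [InnerProductSpace ℂ 𝓗] [CompleteSpace 𝓗]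

theorem hasDerivAt_adjoint_apply {U : ℝ → 𝓗 →L[ℂ] 𝓗} {U' : 𝓗 →L[ℂ] 𝓗} {t : ℝ}
    (h : HasDerivAt U U' t) (x : 𝓗) :
    HasDerivAt (fun s => adjoint (U s) x) (adjoint U' x) t :=
  ((apply ℂ 𝓗 x).restrictScalars ℝ).hasFDerivAt.comp_hasDerivAt t h.star

variable {H U U' : 𝓗 →L[ℂ] 𝓗}

theorem apply_adjoint_apply_of_schrodinger (hH : IsSelfAdjoint H) (hSch : I • U' = H ∘L U)
    (hcoiso : U ∘L adjoint U = 1) (x : 𝓗) : U (adjoint U' x) = I • H x := by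
  have hU' : U' = (-I) • (H ∘L U) := by
    rw [← hSch, smul_smul, neg_mul, I_mul_I, neg_neg, one_smul]
  have hU : U (adjoint U (H x)) = H x := congrArg (· (H x)) hcoiso
  rw [hU', map_smulₛₗ, adjoint_comp, hH.adjoint_eq]
  simp [hU]

theorem inner_adjoint_apply_frame_deriv (hH : IsSelfAdjoint H) (hSch : I • U' = H ∘L U)
    (hcoiso : U ∘L adjoint U = 1) {ι : Type*} [Fintype ι] {ψ : ι → 𝓗} (hψ : Orthonormal ℂ ψ)
    (c c' : ι → ℂ) (p : ι) :
    inner ℂ (adjoint U (ψ p)) (∑ q, (c q • adjoint U' (ψ q) + c' q • adjoint U (ψ q))) =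
      I * ∑ q, inner ℂ (ψ p) (H (ψ q)) * c q + c' p := by
  have hU : ∀ x, U (adjoint U x) = x := fun x => congrArg (· x) hcoiso
  rw [adjoint_inner_left, map_sum]
  simp only [map_add, map_smul, apply_adjoint_apply_of_schrodinger hH hSch hcoiso, hU]
  rw [Finset.sum_add_distrib, inner_add_right, hψ.inner_right_fintype,
    inner_sum, Finset.mul_sum]
  simp only [inner_smul_right]
  congr 1
  exact Finset.sum_congr rfl fun q _ => by ring

end ContinuousLinearMap

open ContinuousLinearMap in
theorem parallel_transport_condition_frame_general
    {𝓗 : Type*} [NormedAddCommGroup 𝓗] [InnerProductSpace ℂ 𝓗] [FiniteDimensional ℂ 𝓗]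
    (Ham : ℝ → 𝓗 →L[ℂ] 𝓗)
    (hHsa : ∀ t, IsSelfAdjoint (Ham t))
    (U U' : ℝ → 𝓗 →L[ℂ] 𝓗)
    (hUuni : ∀ t, adjoint (U t) ∘L U t = 1 ∧ U t ∘L adjoint (U t) = 1)
    (hUderiv : ∀ t, HasDerivAt U (U' t) t)
    (hSch : ∀ t, Complex.I • U' t = Ham t ∘L U t)
    (m : ℕ) (ψ : Fin m → 𝓗) (hψ : Orthonormal ℂ ψ)
    (C : ℝ → Matrix (Fin m) (Fin m) ℂ)
    (hC : ∀ t p k, C t p k = (inner ℂ (ψ p) (Ham t (ψ k)) : ℂ))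
    (V V' : ℝ → Matrix (Fin m) (Fin m) ℂ)
    (hVderiv : ∀ t p k, HasDerivAt (fun s => V s p k) (V' t p k) t)
    (hVode : ∀ t, Complex.I • V' t = C t * V t)
    (ψtil : Fin m → ℝ → 𝓗)
    (hψtil : ∀ k t, ψtil k t = ∑ p, V t p k • (adjoint (U t)) (ψ p)) :
    ∀ t, ∀ p k, ∃ v : 𝓗,
      HasDerivAt (ψtil k) v t ∧ (inner ℂ ((adjoint (U t)) (ψ p)) v : ℂ) = 0 := by
  intro t p k
  refine ⟨∑ q, (V t q k • adjoint (U' t) (ψ q) + V' t q k • adjoint (U t) (ψ q)), ?_, ?_⟩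
  · rw [funext (hψtil k)]
    exact HasDerivAt.fun_sum fun q _ =>
      (hVderiv t q k).smul (hasDerivAt_adjoint_apply (hUderiv t) (ψ q))
  · have hCV : ∑ q, inner ℂ (ψ p) (Ham t (ψ q)) * V t q k = I * V' t p k := by
      simp only [← hC, ← Matrix.mul_apply, ← hVode t, Matrix.smul_apply, smul_eq_mul]
    rw [inner_adjoint_apply_frame_deriv (hHsa t) (hSch t) (hUuni t).2 hψ, hCV, ← mul_assoc, I_mul_I]
    ring

open ContinuousLinearMap in
/-- Proposition 2.1: the parallel-transported eigenvectors
`ψ̃_k(t) = Σ_p Ṽ(t)_{pk} · U(t)⁻¹ψ_p` satisfy `⟨ψ_p(t), (d/dt)ψ̃_k(t)⟩ = 0`,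
where `ψ_p(t) = U(t)⁻¹ψ_p`. -/
theorem parallel_transport_condition_frame
    {𝓗 : Type*} [NormedAddCommGroup 𝓗] [InnerProductSpace ℂ 𝓗] [FiniteDimensional ℂ 𝓗]
    (Ham : ℝ → 𝓗 →L[ℂ] 𝓗) (hHcont : Continuous Ham)
    (hHsa : ∀ t, IsSelfAdjoint (Ham t))
    (U U' : ℝ → 𝓗 →L[ℂ] 𝓗)
    (hU0 : U 0 = 1)
    (hUuni : ∀ t, adjoint (U t) ∘L U t = 1 ∧ U t ∘L adjoint (U t) = 1)
    (hUderiv : ∀ t, HasDerivAt U (U' t) t)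
    (hSch : ∀ t, Complex.I • U' t = Ham t ∘L U t)
    (m : ℕ) (ψ : Fin m → 𝓗) (hψ : Orthonormal ℂ ψ)
    (C : ℝ → Matrix (Fin m) (Fin m) ℂ)
    (hC : ∀ t p k, C t p k = (inner ℂ (ψ p) (Ham t (ψ k)) : ℂ))
    (V V' : ℝ → Matrix (Fin m) (Fin m) ℂ)
    (hV0 : V 0 = 1)
    (hVderiv : ∀ t p k, HasDerivAt (fun s => V s p k) (V' t p k) t)
    (hVode : ∀ t, Complex.I • V' t = C t * V t)
    (ψtil : Fin m → ℝ → 𝓗)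
    (hψtil : ∀ k t, ψtil k t = ∑ p, V t p k • (adjoint (U t)) (ψ p)) :
    ∀ t, ∀ p k, ∃ v : 𝓗,
      HasDerivAt (ψtil k) v t ∧ (inner ℂ ((adjoint (U t)) (ψ p)) v : ℂ) = 0 :=
  parallel_transport_condition_frame_general Ham hHsa U U' hUuni hUderiv hSch m ψ hψ C hC V V'
    hVderiv hVode ψtil hψtil
end

section
/- Let 𝓗 be a finite-dimensional complex inner product space and let ψ̄₁,…,ψ̄_m : [0,T] → 𝓗 and ψ̃₁,…,ψ̃_m : [0,T] → 𝓗 be differentiable curves such that for every t ∈ [0,T]: {ψ̄_k(t)}_{k=1}^m is orthonormal, {ψ̃_k(t)}_{k=1}^m is orthonormal, both families span the same subspace of 𝓗, and ⟨ψ̄_p(t), (d/dt)ψ̃_k(t)⟩ = 0 for all 1 ≤ p, k ≤ m. Define V̄(t)_{p k} := ⟨ψ̄_p(t), ψ̃_k(t)⟩ and A(t)_{p k} := i·⟨ψ̄_p(t), (d/dt)ψ̄_k(t)⟩. Then V̄ satisfies the matrix differential equation i·V̄′(t) = −A(t)·V̄(t) for all t ∈ [0,T]. -/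
/-!
Differentiating the orthonormality relations `⟪ψ̄_p, ψ̄_q⟫ = δ_pq` shows that
`⟪ψ̄_p', ψ̄_q⟫ = -⟪ψ̄_p, ψ̄_q'⟫`. By the parallel-transport condition the derivative of
`V̄_pk = ⟪ψ̄_p, ψ̃_k⟫` is `⟪ψ̄_p', ψ̃_k⟫`, and expanding `ψ̃_k` in the frame `ψ̄`, which spans
the same subspace, turns this into `-∑_q ⟪ψ̄_p, ψ̄_q'⟫ V̄_qk = i (A V̄)_pk`.
-/

open Submodule Set

section

variable {𝕜 E ι : Type*} [RCLike 𝕜] [NormedAddCommGroup E] [InnerProductSpace 𝕜 E]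

local notation "⟪" x ", " y "⟫" => inner 𝕜 x y

theorem Orthonormal.inner_eq_sum_inner_mul_inner_of_mem_span [Fintype ι] {e : ι → E}
    (he : Orthonormal 𝕜 e) {x : E} (hx : x ∈ span 𝕜 (range e)) (y : E) :
    ⟪y, x⟫ = ∑ i, ⟪y, e i⟫ * ⟪e i, x⟫ := by
  obtain ⟨c, rfl⟩ := (mem_span_range_iff_exists_fun 𝕜).mp hx
  simp only [he.inner_right_fintype, inner_sum, inner_smul_right, mul_comm]

theorem inner_deriv_left_eq_neg_inner_deriv_right_of_orthonormal [NormedSpace ℝ E]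
    {e : ι → ℝ → E} {e' : ι → E} {s : Set ℝ} {t : ℝ}
    (hs : UniqueDiffWithinAt ℝ s t) (ht : t ∈ s)
    (hon : ∀ u ∈ s, Orthonormal 𝕜 fun i => e i u)
    (he : ∀ i, HasDerivWithinAt (e i) (e' i) s t) (i j : ι) :
    ⟪e' i, e j t⟫ = -⟪e i t, e' j⟫ := by
  classical
  have hconst : ∀ u ∈ s, ⟪e i u, e j u⟫ = if i = j then 1 else 0 := fun u hu =>
    orthonormal_iff_ite.mp (hon u hu) i j
  have hzero : HasDerivWithinAt (fun u => ⟪e i u, e j u⟫) 0 s t :=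
    (hasDerivWithinAt_const t s _).congr hconst (hconst t ht)
  have hsum := hs.eq_deriv s ((he i).inner 𝕜 (he j)) hzero
  linear_combination hsum

end

open Matrix in
theorem transition_matrix_ode_general
    {𝓗 : Type*} [NormedAddCommGroup 𝓗] [InnerProductSpace ℂ 𝓗]
    (m : ℕ) (T : ℝ) (hT : 0 < T)
    (ψbar ψbar' ψtil ψtil' : Fin m → ℝ → 𝓗)
    (hbderiv : ∀ k, ∀ t ∈ Set.Icc (0:ℝ) T, HasDerivAt (ψbar k) (ψbar' k t) t)
    (htderiv : ∀ k, ∀ t ∈ Set.Icc (0:ℝ) T, HasDerivAt (ψtil k) (ψtil' k t) t)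
    (hbon : ∀ t ∈ Set.Icc (0:ℝ) T, Orthonormal ℂ (fun k => ψbar k t))
    (hspan : ∀ t ∈ Set.Icc (0:ℝ) T,
      Submodule.span ℂ (Set.range fun k => ψbar k t)
        = Submodule.span ℂ (Set.range fun k => ψtil k t))
    (hpar : ∀ t ∈ Set.Icc (0:ℝ) T, ∀ p k, (inner ℂ (ψbar p t) (ψtil' k t) : ℂ) = 0)
    (Vbar A : ℝ → Matrix (Fin m) (Fin m) ℂ)
    (hVbar : ∀ t p k, Vbar t p k = (inner ℂ (ψbar p t) (ψtil k t) : ℂ))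
    (hA : ∀ t p k, A t p k = Complex.I * (inner ℂ (ψbar p t) (ψbar' k t) : ℂ)) :
    ∀ t ∈ Set.Icc (0:ℝ) T, ∃ D : Matrix (Fin m) (Fin m) ℂ,
      (∀ p k, HasDerivAt (fun s => Vbar s p k) (D p k) t) ∧
      Complex.I • D = -(A t * Vbar t) := by
  intro t ht
  have hskew : ∀ p q, inner ℂ (ψbar' p t) (ψbar q t) = -inner ℂ (ψbar p t) (ψbar' q t) :=
    inner_deriv_left_eq_neg_inner_deriv_right_of_orthonormal (e' := fun k => ψbar' k t)
      (uniqueDiffOn_Icc hT t ht) ht hbon fun k => (hbderiv k t ht).hasDerivWithinAt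
  have hmem : ∀ k, ψtil k t ∈ span ℂ (range fun q => ψbar q t) := fun k => by
    rw [hspan t ht]
    exact subset_span ⟨k, rfl⟩
  refine ⟨of fun p k => inner ℂ (ψbar' p t) (ψtil k t), fun p k => ?_, ?_⟩
  · simpa only [of_apply, hVbar, hpar t ht, zero_add] using
      (hbderiv p t ht).inner ℂ (htderiv k t ht)
  · ext p k
    simp only [Matrix.smul_apply, of_apply, Matrix.neg_apply, mul_apply, hA, hVbar, smul_eq_mul]
    rw [(hbon t ht).inner_eq_sum_inner_mul_inner_of_mem_span (hmem k) (ψbar' p t),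
      Finset.mul_sum, ← Finset.sum_neg_distrib]
    exact Finset.sum_congr rfl fun q _ => by rw [hskew]; ring

open Matrix in
/-- If `{ψ̄_k(t)}` and `{ψ̃_k(t)}` are orthonormal frames of the same moving subspace and
the `ψ̃_k` are parallel (`⟨ψ̄_p, ψ̃_k′⟩ = 0`), then the transition matrix
`V̄(t)_{pk} = ⟨ψ̄_p(t), ψ̃_k(t)⟩` satisfies `i·V̄′ = −A·V̄` with
`A(t)_{pk} = i⟨ψ̄_p(t), ψ̄_k′(t)⟩`. -/
theorem transition_matrix_ode
    {𝓗 : Type*} [NormedAddCommGroup 𝓗] [InnerProductSpace ℂ 𝓗] [FiniteDimensional ℂ 𝓗]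
    (m : ℕ) (T : ℝ) (hT : 0 < T)
    (ψbar ψbar' ψtil ψtil' : Fin m → ℝ → 𝓗)
    (hbderiv : ∀ k, ∀ t ∈ Set.Icc (0:ℝ) T, HasDerivAt (ψbar k) (ψbar' k t) t)
    (htderiv : ∀ k, ∀ t ∈ Set.Icc (0:ℝ) T, HasDerivAt (ψtil k) (ψtil' k t) t)
    (hbon : ∀ t ∈ Set.Icc (0:ℝ) T, Orthonormal ℂ (fun k => ψbar k t))
    (hton : ∀ t ∈ Set.Icc (0:ℝ) T, Orthonormal ℂ (fun k => ψtil k t))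
    (hspan : ∀ t ∈ Set.Icc (0:ℝ) T,
      Submodule.span ℂ (Set.range fun k => ψbar k t)
        = Submodule.span ℂ (Set.range fun k => ψtil k t))
    (hpar : ∀ t ∈ Set.Icc (0:ℝ) T, ∀ p k, (inner ℂ (ψbar p t) (ψtil' k t) : ℂ) = 0)
    (Vbar A : ℝ → Matrix (Fin m) (Fin m) ℂ)
    (hVbar : ∀ t p k, Vbar t p k = (inner ℂ (ψbar p t) (ψtil k t) : ℂ))
    (hA : ∀ t p k, A t p k = Complex.I * (inner ℂ (ψbar p t) (ψbar' k t) : ℂ)) :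
    ∀ t ∈ Set.Icc (0:ℝ) T, ∃ D : Matrix (Fin m) (Fin m) ℂ,
      (∀ p k, HasDerivAt (fun s => Vbar s p k) (D p k) t) ∧
      Complex.I • D = -(A t * Vbar t) :=
  transition_matrix_ode_general m T hT ψbar ψbar' ψtil ψtil' hbderiv htderiv hbon hspan hpar Vbar A
    hVbar hA
end

section
/- (Proposition 2.2.) Let 𝓗 be a finite-dimensional complex inner product space, let ψ̄₁,…,ψ̄_m : [0,T] → 𝓗 and ψ̃₁,…,ψ̃_m : [0,T] → 𝓗 be differentiable curves such that for every t ∈ [0,T] both {ψ̄_k(t)} and {ψ̃_k(t)} are orthonormal families spanning the same subspace of 𝓗, ⟨ψ̄_p(t), (d/dt)ψ̃_k(t)⟩ = 0 for all p, k, t, and ψ̄_k(T) = ψ̄_k(0) = ψ̃_k(0) =: ψ_k for all k. Then the matrix G with entries G_{p k} := ⟨ψ_p, ψ̃_k(T)⟩ is unitary and G = V̄(T), where V̄ is the unique solution of i·V̄′(t) = −A(t)·V̄(t) with V̄(0) = 1 and A(t)_{p k} := i·⟨ψ̄_p(t), (d/dt)ψ̄_k(t)⟩. In particular, G is determined by the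 curves ψ̄₁,…,ψ̄_m alone. -/
/-!
Both `V̄(t)` and the overlap matrix `W(t)_{pk} = ⟨ψ̄_p(t), ψ̃_k(t)⟩` solve `X' = K X` with
`K = -(⟨ψ̄_p, ψ̄_k'⟩) = i A`: for `W` the parallel-transport condition removes `⟨ψ̄_p, ψ̃_k'⟩`
and, since `ψ̃_k(t)` lies in the span of the orthonormal frame `ψ̄(t)`, the remaining term
`⟨ψ̄_p', ψ̃_k⟩` factors through that frame. Differentiating the orthonormality relations shows
that `K` is skew-Hermitian, so `V̄ᴴ V̄` and `V̄ᴴ W` are constant, equal to `1` at `t = 0`. Hence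
`V̄(T)` is unitary and `G = W(T) = V̄(T)`.
-/

open Matrix Set

open scoped InnerProductSpace

namespace Matrix

variable {𝕜 : Type*} [RCLike 𝕜] {l m n : Type*} {t : ℝ}

theorem hasDerivAt_mul_apply_s8 [Fintype m] {U : ℝ → Matrix l m 𝕜} {X : ℝ → Matrix m n 𝕜}
    {U' : Matrix l m 𝕜} {X' : Matrix m n 𝕜}
    (hU : ∀ i j, HasDerivAt (fun s => U s i j) (U' i j) t)
    (hX : ∀ i j, HasDerivAt (fun s => X s i j) (X' i j) t) (i : l) (k : n) :
    HasDerivAt (fun s => (U s * X s) i k) ((U' * X t + U t * X') i k) t := by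
  simp only [mul_apply, add_apply, ← Finset.sum_add_distrib]
  exact HasDerivAt.fun_sum fun j _ => (hU i j).mul (hX j k)

theorem hasDerivAt_conjTranspose_apply_s8 {U : ℝ → Matrix m n 𝕜} {U' : Matrix m n 𝕜}
    (hU : ∀ i j, HasDerivAt (fun s => U s i j) (U' i j) t) (i : n) (j : m) :
    HasDerivAt (fun s => (U s)ᴴ i j) (U'ᴴ i j) t :=
  (hU j i).star

theorem conjTranspose_mul_eq_of_hasDerivAt [Fintype m] {a b : ℝ} (hab : a ≤ b)
    {K : ℝ → Matrix m m 𝕜} {U : ℝ → Matrix m l 𝕜} {X : ℝ → Matrix m n 𝕜}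
    (hK : ∀ t ∈ Icc a b, (K t)ᴴ = -K t)
    (hU : ∀ t ∈ Icc a b, ∀ i j, HasDerivAt (fun s => U s i j) ((K t * U t) i j) t)
    (hX : ∀ t ∈ Icc a b, ∀ i j, HasDerivAt (fun s => X s i j) ((K t * X t) i j) t) :
    (U b)ᴴ * X b = (U a)ᴴ * X a := by
  have hderiv : ∀ t ∈ Icc a b, ∀ i j, HasDerivAt (fun s => ((U s)ᴴ * X s) i j) 0 t := by
    intro t ht i j
    have h := hasDerivAt_mul_apply_s8 (hasDerivAt_conjTranspose_apply_s8 (hU t ht)) (hX t ht) i j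
    rwa [conjTranspose_mul, hK t ht, Matrix.mul_neg, Matrix.neg_mul, Matrix.mul_assoc,
      neg_add_cancel] at h
  ext i j
  exact constant_of_has_deriv_right_zero
    (fun t ht => (hderiv t ht i j).continuousAt.continuousWithinAt)
    (fun t ht => (hderiv t (Ico_subset_Icc_self ht) i j).hasDerivWithinAt) b ⟨hab, le_rfl⟩

end Matrix

theorem HasDerivAt.eq_zero_of_eqOn_Icc {F : Type*} [NormedAddCommGroup F] [NormedSpace ℝ F]
    {f : ℝ → F} {f' c : F} {a b t : ℝ} (hab : a < b) (ht : t ∈ Icc a b) (hf : HasDerivAt f f' t)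
    (hc : EqOn f (fun _ => c) (Icc a b)) : f' = 0 :=
  (uniqueDiffOn_Icc hab t ht).eq_deriv _ hf.hasDerivWithinAt
    ((hasDerivWithinAt_const t _ c).congr hc (hc ht))

section Overlap

variable {𝕜 E : Type*} [RCLike 𝕜] [NormedAddCommGroup E] [InnerProductSpace 𝕜 E]
  {ι κ : Type*}

variable (𝕜) in
def overlapMatrix (v : ι → E) (w : κ → E) : Matrix ι κ 𝕜 := of fun i k => ⟪v i, w k⟫_𝕜

@[simp]
theorem overlapMatrix_apply (v : ι → E) (w : κ → E) (i : ι) (k : κ) :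
    overlapMatrix 𝕜 v w i k = ⟪v i, w k⟫_𝕜 := rfl

theorem conjTranspose_overlapMatrix (v : ι → E) (w : κ → E) :
    (overlapMatrix 𝕜 v w)ᴴ = overlapMatrix 𝕜 w v := by
  ext; simp

theorem Orthonormal.overlapMatrix_self [DecidableEq ι] {v : ι → E} (hv : Orthonormal 𝕜 v) :
    overlapMatrix 𝕜 v v = 1 :=
  gram_eq_one_iff_orthonormal.mpr hv

theorem Orthonormal.sum_inner_smul_eq_of_mem_span [Fintype ι] {v : ι → E} (hv : Orthonormal 𝕜 v)
    {x : E} (hx : x ∈ Submodule.span 𝕜 (range v)) : ∑ i, ⟪v i, x⟫_𝕜 • v i = x := by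
  obtain ⟨c, rfl⟩ := (Submodule.mem_span_range_iff_exists_fun 𝕜).mp hx
  simp [hv.inner_right_fintype]

theorem Orthonormal.overlapMatrix_mul_overlapMatrix [Fintype ι] {υ : Type*} {v : ι → E}
    (hv : Orthonormal 𝕜 v) (u : υ → E) {w : κ → E}
    (hw : ∀ k, w k ∈ Submodule.span 𝕜 (range v)) :
    overlapMatrix 𝕜 u v * overlapMatrix 𝕜 v w = overlapMatrix 𝕜 u w := by
  ext p k
  conv_rhs => rw [overlapMatrix_apply, ← hv.sum_inner_smul_eq_of_mem_span (hw k), inner_sum]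
  simp [mul_apply, inner_smul_right, mul_comm]

variable [NormedSpace ℝ E] {f f' : ι → ℝ → E} {g g' : κ → ℝ → E} {t : ℝ}

theorem hasDerivAt_overlapMatrix_apply (hf : ∀ i, HasDerivAt (f i) (f' i t) t)
    (hg : ∀ k, HasDerivAt (g k) (g' k t) t) (i : ι) (k : κ) :
    HasDerivAt (fun s => overlapMatrix 𝕜 (f · s) (g · s) i k)
      ((overlapMatrix 𝕜 (f · t) (g' · t) + overlapMatrix 𝕜 (f' · t) (g · t)) i k) t :=
  (hf i).inner 𝕜 (hg k)

theorem overlapMatrix_deriv_eq_neg_of_orthonormal {a b : ℝ} (hab : a < b) (ht : t ∈ Icc a b)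
    (hf : ∀ i, HasDerivAt (f i) (f' i t) t) (hon : ∀ s ∈ Icc a b, Orthonormal 𝕜 (f · s)) :
    overlapMatrix 𝕜 (f' · t) (f · t) = -overlapMatrix 𝕜 (f · t) (f' · t) := by
  classical
  ext i j
  have h := (hasDerivAt_overlapMatrix_apply (𝕜 := 𝕜) hf hf i j).eq_zero_of_eqOn_Icc hab ht
    (c := (1 : Matrix ι ι 𝕜) i j) fun s hs => by simp only [(hon s hs).overlapMatrix_self]
  rw [Matrix.add_apply] at h
  rw [Matrix.neg_apply]
  linear_combination h

theorem conjTranspose_overlapMatrix_deriv_of_orthonormal {a b : ℝ} (hab : a < b)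
    (ht : t ∈ Icc a b) (hf : ∀ i, HasDerivAt (f i) (f' i t) t)
    (hon : ∀ s ∈ Icc a b, Orthonormal 𝕜 (f · s)) :
    (overlapMatrix 𝕜 (f · t) (f' · t))ᴴ = -overlapMatrix 𝕜 (f · t) (f' · t) := by
  rw [conjTranspose_overlapMatrix, overlapMatrix_deriv_eq_neg_of_orthonormal hab ht hf hon]

theorem hasDerivAt_overlapMatrix_apply_of_parallel [Fintype ι] {a b : ℝ} (hab : a < b)
    (ht : t ∈ Icc a b) (hf : ∀ i, HasDerivAt (f i) (f' i t) t)
    (hg : ∀ k, HasDerivAt (g k) (g' k t) t) (hon : ∀ s ∈ Icc a b, Orthonormal 𝕜 (f · s))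
    (hspan : ∀ k, g k t ∈ Submodule.span 𝕜 (range (f · t)))
    (hpar : ∀ i k, ⟪f i t, g' k t⟫_𝕜 = 0) (i : ι) (k : κ) :
    HasDerivAt (fun s => overlapMatrix 𝕜 (f · s) (g · s) i k)
      ((-overlapMatrix 𝕜 (f · t) (f' · t) * overlapMatrix 𝕜 (f · t) (g · t)) i k) t := by
  refine (hasDerivAt_overlapMatrix_apply hf hg i k).congr_deriv ?_
  rw [← (hon t ht).overlapMatrix_mul_overlapMatrix _ hspan,
    overlapMatrix_deriv_eq_neg_of_orthonormal hab ht hf hon]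
  simp [hpar]

end Overlap

open Matrix in
theorem nonabelian_geometric_phase_eq_holonomy_general
    {𝓗 : Type*} [NormedAddCommGroup 𝓗] [InnerProductSpace ℂ 𝓗]
    (m : ℕ) (T : ℝ) (hT : 0 < T)
    (ψbar ψbar' ψtil ψtil' : Fin m → ℝ → 𝓗)
    (hbderiv : ∀ k, ∀ t ∈ Set.Icc (0:ℝ) T, HasDerivAt (ψbar k) (ψbar' k t) t)
    (htderiv : ∀ k, ∀ t ∈ Set.Icc (0:ℝ) T, HasDerivAt (ψtil k) (ψtil' k t) t)
    (hbon : ∀ t ∈ Set.Icc (0:ℝ) T, Orthonormal ℂ (fun k => ψbar k t))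
    (hspan : ∀ t ∈ Set.Icc (0:ℝ) T,
      Submodule.span ℂ (Set.range fun k => ψbar k t)
        = Submodule.span ℂ (Set.range fun k => ψtil k t))
    (hpar : ∀ t ∈ Set.Icc (0:ℝ) T, ∀ p k, (inner ℂ (ψbar p t) (ψtil' k t) : ℂ) = 0)
    (ψ : Fin m → 𝓗)
    (hclosed : ∀ k, ψbar k T = ψ k ∧ ψbar k 0 = ψ k ∧ ψtil k 0 = ψ k)
    (A : ℝ → Matrix (Fin m) (Fin m) ℂ)
    (hA : ∀ t p k, A t p k = Complex.I * (inner ℂ (ψbar p t) (ψbar' k t) : ℂ))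
    (Vb Vb' : ℝ → Matrix (Fin m) (Fin m) ℂ)
    (hVb0 : Vb 0 = 1)
    (hVbderiv : ∀ t ∈ Set.Icc (0:ℝ) T, ∀ p k, HasDerivAt (fun s => Vb s p k) (Vb' t p k) t)
    (hVbode : ∀ t ∈ Set.Icc (0:ℝ) T, Complex.I • Vb' t = -(A t * Vb t))
    (G : Matrix (Fin m) (Fin m) ℂ)
    (hG : ∀ p k, G p k = (inner ℂ (ψ p) (ψtil k T) : ℂ)) :
    (Gᴴ * G = 1 ∧ G * Gᴴ = 1) ∧ G = Vb T := by
  set K : ℝ → Matrix (Fin m) (Fin m) ℂ := fun t => -overlapMatrix ℂ (ψbar · t) (ψbar' · t)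
  set W : ℝ → Matrix (Fin m) (Fin m) ℂ := fun t => overlapMatrix ℂ (ψbar · t) (ψtil · t)
  have hK_skew : ∀ t ∈ Icc 0 T, (K t)ᴴ = -K t := fun t ht => by
    rw [conjTranspose_neg,
      conjTranspose_overlapMatrix_deriv_of_orthonormal hT ht (hbderiv · t ht) hbon]
  have hK_eq : ∀ t, Complex.I • A t = K t := fun t => by
    ext p k
    simp [K, hA, ← mul_assoc]
  have hVb : ∀ t ∈ Icc 0 T, ∀ p k, HasDerivAt (fun s => Vb s p k) ((K t * Vb t) p k) t := by
    intro t ht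
    have hode : Vb' t = K t * Vb t := by
      rw [← hK_eq, smul_mul_assoc, ← neg_neg (A t * Vb t), ← hVbode t ht, smul_neg, smul_smul,
        Complex.I_mul_I, neg_one_smul, neg_neg]
    exact hode ▸ hVbderiv t ht
  have hW : ∀ t ∈ Icc 0 T, ∀ p k, HasDerivAt (fun s => W s p k) ((K t * W t) p k) t :=
    fun t ht => hasDerivAt_overlapMatrix_apply_of_parallel hT ht (hbderiv · t ht)
      (htderiv · t ht) hbon (fun k => hspan t ht ▸ Submodule.subset_span (mem_range_self k))
      (hpar t ht)
  have hW0 : W 0 = 1 := by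
    simpa [W, hclosed] using (hbon 0 ⟨le_rfl, hT.le⟩).overlapMatrix_self
  have hGW : G = W T := by
    ext p k
    simp [W, hG, hclosed]
  have hVV : (Vb T)ᴴ * Vb T = 1 := by
    simpa [hVb0] using conjTranspose_mul_eq_of_hasDerivAt hT.le hK_skew hVb hVb
  have hVG : (Vb T)ᴴ * G = 1 := by
    simpa [hVb0, hW0, ← hGW] using conjTranspose_mul_eq_of_hasDerivAt hT.le hK_skew hVb hW
  have hGV : G = Vb T := by
    rw [← Matrix.one_mul G, ← mul_eq_one_comm.mp hVV, Matrix.mul_assoc, hVG, Matrix.mul_one]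
  exact ⟨⟨hGV ▸ hVV, hGV ▸ mul_eq_one_comm.mp hVV⟩, hGV⟩

open Matrix in
/-- Proposition 2.2: the non-Abelian observable-geometric phase `G_{pk} = ⟨ψ_p, ψ̃_k(T)⟩`
is unitary and equals `V̄(T)`, where `V̄` solves `i·V̄′ = −A·V̄`, `V̄(0) = 1`, with
`A(t)_{pk} = i⟨ψ̄_p(t), ψ̄_k′(t)⟩`; in particular `G` is determined by the curves `ψ̄_k`
alone. -/
theorem nonabelian_geometric_phase_eq_holonomy
    {𝓗 : Type*} [NormedAddCommGroup 𝓗] [InnerProductSpace ℂ 𝓗] [FiniteDimensional ℂ 𝓗]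
    (m : ℕ) (T : ℝ) (hT : 0 < T)
    (ψbar ψbar' ψtil ψtil' : Fin m → ℝ → 𝓗)
    (hbderiv : ∀ k, ∀ t ∈ Set.Icc (0:ℝ) T, HasDerivAt (ψbar k) (ψbar' k t) t)
    (htderiv : ∀ k, ∀ t ∈ Set.Icc (0:ℝ) T, HasDerivAt (ψtil k) (ψtil' k t) t)
    (hbon : ∀ t ∈ Set.Icc (0:ℝ) T, Orthonormal ℂ (fun k => ψbar k t))
    (hton : ∀ t ∈ Set.Icc (0:ℝ) T, Orthonormal ℂ (fun k => ψtil k t))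
    (hspan : ∀ t ∈ Set.Icc (0:ℝ) T,
      Submodule.span ℂ (Set.range fun k => ψbar k t)
        = Submodule.span ℂ (Set.range fun k => ψtil k t))
    (hpar : ∀ t ∈ Set.Icc (0:ℝ) T, ∀ p k, (inner ℂ (ψbar p t) (ψtil' k t) : ℂ) = 0)
    (ψ : Fin m → 𝓗)
    (hclosed : ∀ k, ψbar k T = ψ k ∧ ψbar k 0 = ψ k ∧ ψtil k 0 = ψ k)
    (A : ℝ → Matrix (Fin m) (Fin m) ℂ)
    (hA : ∀ t p k, A t p k = Complex.I * (inner ℂ (ψbar p t) (ψbar' k t) : ℂ))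
    (Vb Vb' : ℝ → Matrix (Fin m) (Fin m) ℂ)
    (hVb0 : Vb 0 = 1)
    (hVbderiv : ∀ t ∈ Set.Icc (0:ℝ) T, ∀ p k, HasDerivAt (fun s => Vb s p k) (Vb' t p k) t)
    (hVbode : ∀ t ∈ Set.Icc (0:ℝ) T, Complex.I • Vb' t = -(A t * Vb t))
    (G : Matrix (Fin m) (Fin m) ℂ)
    (hG : ∀ p k, G p k = (inner ℂ (ψ p) (ψtil k T) : ℂ)) :
    (Gᴴ * G = 1 ∧ G * Gᴴ = 1) ∧ G = Vb T :=
  nonabelian_geometric_phase_eq_holonomy_general m T hT ψbar ψbar' ψtil ψtil' hbderiv htderiv hbon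
    hspan hpar ψ hclosed A hA Vb Vb' hVb0 hVbderiv hVbode G hG
end

section
/- Let A : [0,T] → Matrix (Fin m) (Fin m) ℂ be continuous. Then for every t ∈ [0,T] the Dyson series V(t) := 1 + Σ_{n=1}^∞ iⁿ ∫₀^t ∫₀^{t₁} ⋯ ∫₀^{t_{n−1}} A(t₁)·A(t₂)⋯A(t_n) dt_n ⋯ dt₂ dt₁ converges (absolutely in the matrix norm), and V is the unique differentiable solution on [0,T] of i·V′(t) = −A(t)·V(t) with V(0) = 1. -/
/-!
The Picard iterates `y₀ = x₀`, `yₙ₊₁(t) = ∫₀ᵗ B(s) yₙ(s) ds` of `x' = B x` obey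
`‖yₙ(t)‖ ≤ ‖x₀‖ (M t)ⁿ / n!` with `M = sup ‖B‖`, so their sum converges uniformly on `[0, T]`.
Dominated convergence then gives the integral equation `V(t) = x₀ + ∫₀ᵗ B V`, hence the ODE by
the fundamental theorem of calculus, and uniqueness follows from Grönwall's inequality since
`x ↦ B(t) x` is `M`-Lipschitz. The Dyson series is the case `B = i A`, `x₀ = 1`.
-/

open MeasureTheory Set
open scoped Nat Interval

variable {E : Type*} [NormedRing E] [NormedSpace ℝ E]

noncomputable def dysonTerm (B : ℝ → E) (x₀ : E) : ℕ → ℝ → E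
  | 0 => fun _ => x₀
  | n + 1 => fun t => ∫ s in (0 : ℝ)..t, B s * dysonTerm B x₀ n s

noncomputable def dysonSeries (B : ℝ → E) (x₀ : E) (t : ℝ) : E :=
  ∑' n, dysonTerm B x₀ n t

@[simp]
theorem dysonTerm_zero (B : ℝ → E) (x₀ : E) (t : ℝ) : dysonTerm B x₀ 0 t = x₀ := rfl

@[simp]
theorem dysonTerm_succ (B : ℝ → E) (x₀ : E) (n : ℕ) (t : ℝ) :
    dysonTerm B x₀ (n + 1) t = ∫ s in (0 : ℝ)..t, B s * dysonTerm B x₀ n s := rfl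

theorem dysonSeries_zero (B : ℝ → E) (x₀ : E) : dysonSeries B x₀ 0 = x₀ :=
  (tsum_eq_single 0 fun n hn => by
    obtain ⟨k, rfl⟩ := Nat.exists_eq_succ_of_ne_zero hn
    exact intervalIntegral.integral_same).trans rfl

variable {B : ℝ → E} {T M t : ℝ}

theorem norm_dysonTerm_le (hB : ∀ s ∈ Icc 0 T, ‖B s‖ ≤ M) (x₀ : E) (n : ℕ) (ht : t ∈ Icc 0 T) :
    ‖dysonTerm B x₀ n t‖ ≤ ‖x₀‖ * ((M * t) ^ n / n !) := by
  have hM : 0 ≤ M := (norm_nonneg _).trans (hB 0 ⟨le_rfl, ht.1.trans ht.2⟩)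
  induction n generalizing t with
  | zero => simp
  | succ n ih =>
    have hbound : ∀ s ∈ Ioc 0 t, ‖B s * dysonTerm B x₀ n s‖ ≤ ‖x₀‖ * M ^ (n + 1) / n ! * s ^ n :=
      fun s hs => by
        have hs' : s ∈ Icc 0 T := ⟨hs.1.le, hs.2.trans ht.2⟩
        calc ‖B s * dysonTerm B x₀ n s‖ ≤ M * (‖x₀‖ * ((M * s) ^ n / n !)) :=
              (norm_mul_le _ _).trans (mul_le_mul (hB s hs') (ih hs') (norm_nonneg _) hM)
          _ = ‖x₀‖ * M ^ (n + 1) / n ! * s ^ n := by ring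
    calc ‖dysonTerm B x₀ (n + 1) t‖
        ≤ ∫ s in (0 : ℝ)..t, ‖x₀‖ * M ^ (n + 1) / n ! * s ^ n :=
          intervalIntegral.norm_integral_le_of_norm_le ht.1 (.of_forall hbound)
            (((continuous_pow n).const_mul _).intervalIntegrable _ _)
      _ = ‖x₀‖ * ((M * t) ^ (n + 1) / (n + 1)!) := by
          rw [intervalIntegral.integral_const_mul, integral_pow, Nat.factorial_succ]
          push_cast
          field_simp
          ring

theorem norm_dysonTerm_le_of_mem_Icc (hB : ∀ s ∈ Icc 0 T, ‖B s‖ ≤ M) (x₀ : E) (n : ℕ)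
    (ht : t ∈ Icc 0 T) : ‖dysonTerm B x₀ n t‖ ≤ ‖x₀‖ * ((M * T) ^ n / n !) := by
  have hM : 0 ≤ M := (norm_nonneg _).trans (hB 0 ⟨le_rfl, ht.1.trans ht.2⟩)
  refine (norm_dysonTerm_le hB x₀ n ht).trans ?_
  gcongr
  exacts [mul_nonneg hM ht.1, ht.2]

theorem summable_norm_dysonTerm (hB : ContinuousOn B (Icc 0 T)) (x₀ : E) (ht : t ∈ Icc 0 T) :
    Summable fun n => ‖dysonTerm B x₀ n t‖ := by
  obtain ⟨M, hM⟩ := isCompact_Icc.exists_bound_of_continuousOn hB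
  exact .of_nonneg_of_le (fun n => norm_nonneg _) (fun n => norm_dysonTerm_le hM x₀ n ht)
    ((Real.summable_pow_div_factorial _).mul_left _)

variable [CompleteSpace E]

theorem hasDerivWithinAt_integral_Icc {f : ℝ → E} {a b c : ℝ} (hf : ContinuousOn f (Icc b c))
    (ha : a ∈ Icc b c) (ht : t ∈ Icc b c) :
    HasDerivWithinAt (fun u => ∫ s in a..u, f s) (f t) (Icc b c) t :=
  have : Fact (t ∈ Icc b c) := ⟨ht⟩
  intervalIntegral.integral_hasDerivWithinAt_right
    ((hf.mono (uIcc_subset_Icc ha ht)).intervalIntegrable)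
    (hf.stronglyMeasurableAtFilter_nhdsWithin measurableSet_Icc t) (hf t ht)

theorem continuousOn_dysonTerm (hB : ContinuousOn B (Icc 0 T)) (x₀ : E) (n : ℕ) :
    ContinuousOn (dysonTerm B x₀ n) (Icc 0 T) := by
  induction n with
  | zero => exact continuousOn_const
  | succ n ih =>
    exact fun t ht => (hasDerivWithinAt_integral_Icc (hB.mul ih)
      ⟨le_rfl, ht.1.trans ht.2⟩ ht).continuousWithinAt

theorem hasSum_dysonSeries (hB : ContinuousOn B (Icc 0 T)) (x₀ : E) (ht : t ∈ Icc 0 T) :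
    HasSum (fun n => dysonTerm B x₀ n t) (dysonSeries B x₀ t) :=
  (summable_norm_dysonTerm hB x₀ ht).of_norm.hasSum

theorem continuousOn_dysonSeries (hB : ContinuousOn B (Icc 0 T)) (x₀ : E) :
    ContinuousOn (dysonSeries B x₀) (Icc 0 T) := by
  obtain ⟨M, hM⟩ := isCompact_Icc.exists_bound_of_continuousOn hB
  exact continuousOn_tsum (continuousOn_dysonTerm hB x₀)
    ((Real.summable_pow_div_factorial _).mul_left _)
    fun n t ht => norm_dysonTerm_le_of_mem_Icc hM x₀ n ht

theorem dysonSeries_eq_add_integral (hB : ContinuousOn B (Icc 0 T)) (x₀ : E) (ht : t ∈ Icc 0 T) :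
    dysonSeries B x₀ t = x₀ + ∫ s in (0 : ℝ)..t, B s * dysonSeries B x₀ s := by
  obtain ⟨M, hM⟩ := isCompact_Icc.exists_bound_of_continuousOn hB
  have hM₀ : 0 ≤ M := (norm_nonneg _).trans (hM 0 ⟨le_rfl, ht.1.trans ht.2⟩)
  have hsub : Ι 0 t ⊆ Icc 0 T := by
    rw [uIoc_of_le ht.1]
    exact fun s hs => ⟨hs.1.le, hs.2.trans ht.2⟩
  have hint : HasSum (fun n => dysonTerm B x₀ (n + 1) t)
      (∫ s in (0 : ℝ)..t, B s * dysonSeries B x₀ s) :=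
    intervalIntegral.hasSum_integral_of_dominated_convergence
      (fun n _ => M * (‖x₀‖ * ((M * T) ^ n / n !)))
      (fun n => ((hB.mul (continuousOn_dysonTerm hB x₀ n)).mono hsub).aestronglyMeasurable
        measurableSet_uIoc)
      (fun n => .of_forall fun s hs => (norm_mul_le _ _).trans <| mul_le_mul (hM s (hsub hs))
        (norm_dysonTerm_le_of_mem_Icc hM x₀ n (hsub hs)) (norm_nonneg _) hM₀)
      (.of_forall fun _ _ => ((Real.summable_pow_div_factorial _).mul_left _).mul_left _)
      intervalIntegrable_const
      (.of_forall fun s hs => (hasSum_dysonSeries hB x₀ (hsub hs)).mul_left (B s))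
  exact (hasSum_dysonSeries hB x₀ ht).unique (hint.zero_add (f := fun n => dysonTerm B x₀ n t))

theorem hasDerivWithinAt_dysonSeries (hB : ContinuousOn B (Icc 0 T)) (x₀ : E) (ht : t ∈ Icc 0 T) :
    HasDerivWithinAt (dysonSeries B x₀) (B t * dysonSeries B x₀ t) (Icc 0 T) t :=
  ((hasDerivWithinAt_integral_Icc (hB.mul (continuousOn_dysonSeries hB x₀))
    ⟨le_rfl, ht.1.trans ht.2⟩ ht).const_add x₀).congr
    (fun _ hs => dysonSeries_eq_add_integral hB x₀ hs) (dysonSeries_eq_add_integral hB x₀ ht)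

theorem eqOn_dysonSeries_of_hasDerivWithinAt {x₀ : E} {W : ℝ → E} (hB : ContinuousOn B (Icc 0 T))
    (hW₀ : W 0 = x₀) (hW : ∀ t ∈ Icc 0 T, HasDerivWithinAt W (B t * W t) (Icc 0 T) t) :
    EqOn W (dysonSeries B x₀) (Icc 0 T) := by
  obtain ⟨M, hM⟩ := isCompact_Icc.exists_bound_of_continuousOn hB
  have hlip : ∀ t ∈ Ico 0 T, LipschitzOnWith M.toNNReal (B t * ·) univ := fun t ht =>
    ((lipschitzWith_smul (B t)).weaken (by
      simpa using Real.toNNReal_le_toNNReal (hM t (Ico_subset_Icc_self ht)))).lipschitzOnWith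
  have hderiv {f : ℝ → E} (hf : ∀ t ∈ Icc 0 T, HasDerivWithinAt f (B t * f t) (Icc 0 T) t)
      (t) (ht : t ∈ Ico 0 T) : HasDerivWithinAt f (B t * f t) (Ici t) t :=
    (hf t (Ico_subset_Icc_self ht)).mono_of_mem_nhdsWithin (Icc_mem_nhdsGE_of_mem ht)
  exact ODE_solution_unique_of_mem_Icc_right hlip
    (fun t ht => (hW t ht).continuousWithinAt) (hderiv hW) (fun _ _ => mem_univ _)
    (continuousOn_dysonSeries hB x₀) (hderiv fun t ht => hasDerivWithinAt_dysonSeries hB x₀ ht)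
    (fun _ _ => mem_univ _) (hW₀.trans (dysonSeries_zero B x₀).symm)

attribute [local instance] Matrix.linftyOpNormedRing Matrix.linftyOpNormedAlgebra

open MeasureTheory intervalIntegral in
theorem dyson_series_solves_ode_general
    (m : ℕ) (T : ℝ)
    (A : ℝ → Matrix (Fin m) (Fin m) ℂ)
    (hAcont : ContinuousOn A (Set.Icc 0 T))
    (dyson : ℕ → ℝ → Matrix (Fin m) (Fin m) ℂ)
    (hdyson0 : ∀ t, dyson 0 t = 1)
    (hdysonSucc : ∀ n t, dyson (n + 1) t =
      Complex.I • ∫ s in (0:ℝ)..t, A s * dyson n s)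
    (V : ℝ → Matrix (Fin m) (Fin m) ℂ)
    (hV : ∀ t, V t = ∑' n : ℕ, dyson n t) :
    (∀ t ∈ Set.Icc (0:ℝ) T, Summable fun n => ‖dyson n t‖) ∧
    V 0 = 1 ∧
    (∀ t ∈ Set.Icc (0:ℝ) T, ∃ D : Matrix (Fin m) (Fin m) ℂ,
      HasDerivWithinAt V D (Set.Icc (0:ℝ) T) t ∧ Complex.I • D = -(A t * V t)) ∧
    (∀ W W' : ℝ → Matrix (Fin m) (Fin m) ℂ, W 0 = 1 →
      (∀ t ∈ Set.Icc (0:ℝ) T, HasDerivWithinAt W (W' t) (Set.Icc (0:ℝ) T) t) →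
      (∀ t ∈ Set.Icc (0:ℝ) T, Complex.I • W' t = -(A t * W t)) →
      ∀ t ∈ Set.Icc (0:ℝ) T, W t = V t) := by
  have hB : ContinuousOn (Complex.I • A) (Icc 0 T) := hAcont.const_smul Complex.I
  have hdyson : dyson = dysonTerm (Complex.I • A) 1 := by
    funext n t
    induction n generalizing t with
    | zero => exact hdyson0 t
    | succ n ih =>
      simp only [hdysonSucc, dysonTerm_succ, ih, Pi.smul_apply, smul_mul_assoc,
        intervalIntegral.integral_smul]
  have hI (X Y : Matrix (Fin m) (Fin m) ℂ) : Complex.I • X = -Y ↔ X = Complex.I • Y := by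
    rw [← neg_one_smul ℂ Y, ← Complex.I_mul_I, ← smul_smul, smul_right_inj Complex.I_ne_zero]
  have hV' : V = dysonSeries (Complex.I • A) 1 := funext fun t => by rw [hV, hdyson]; rfl
  subst hdyson hV'
  refine ⟨fun t ht => summable_norm_dysonTerm hB 1 ht, dysonSeries_zero _ 1,
    fun t ht => ⟨_, hasDerivWithinAt_dysonSeries hB 1 ht,
      (hI _ _).2 (smul_mul_assoc Complex.I (A t) _)⟩,
    fun W W' hW₀ hW hWeq t ht => eqOn_dysonSeries_of_hasDerivWithinAt hB hW₀ (fun t ht => ?_) ht⟩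
  rw [Pi.smul_apply, smul_mul_assoc, ← (hI _ _).1 (hWeq t ht)]
  exact hW t ht

open MeasureTheory intervalIntegral in
/-- The Dyson series `V(t) = 1 + Σ_n iⁿ ∫₀^t∫₀^{t₁}⋯∫₀^{t_{n-1}} A(t₁)⋯A(t_n) dt_n⋯dt₁`
converges absolutely in the (submultiplicative) matrix norm, and gives the unique
differentiable solution of `i·V′(t) = −A(t)·V(t)` with `V(0) = 1` on `[0,T]`.
Here `dyson (n+1) t = i·∫₀^t A(s)·(dyson n s) ds`, `dyson 0 = 1`, encodes the iterated
integrals over the simplex. -/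
theorem dyson_series_solves_ode
    (m : ℕ) (T : ℝ) (hT : 0 < T)
    (A : ℝ → Matrix (Fin m) (Fin m) ℂ)
    (hAcont : ContinuousOn A (Set.Icc 0 T))
    (dyson : ℕ → ℝ → Matrix (Fin m) (Fin m) ℂ)
    (hdyson0 : ∀ t, dyson 0 t = 1)
    (hdysonSucc : ∀ n t, dyson (n + 1) t =
      Complex.I • ∫ s in (0:ℝ)..t, A s * dyson n s)
    (V : ℝ → Matrix (Fin m) (Fin m) ℂ)
    (hV : ∀ t, V t = ∑' n : ℕ, dyson n t) :
    (∀ t ∈ Set.Icc (0:ℝ) T, Summable fun n => ‖dyson n t‖) ∧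
    V 0 = 1 ∧
    (∀ t ∈ Set.Icc (0:ℝ) T, ∃ D : Matrix (Fin m) (Fin m) ℂ,
      HasDerivWithinAt V D (Set.Icc (0:ℝ) T) t ∧ Complex.I • D = -(A t * V t)) ∧
    (∀ W W' : ℝ → Matrix (Fin m) (Fin m) ℂ, W 0 = 1 →
      (∀ t ∈ Set.Icc (0:ℝ) T, HasDerivWithinAt W (W' t) (Set.Icc (0:ℝ) T) t) →
      (∀ t ∈ Set.Icc (0:ℝ) T, Complex.I • W' t = -(A t * W t)) →
      ∀ t ∈ Set.Icc (0:ℝ) T, W t = V t) :=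
  dyson_series_solves_ode_general m T A hAcont dyson hdyson0 hdysonSucc V hV
end

section
/- In ℂ³ with standard orthonormal basis e₀, e₁, e₂, let ω₀, ω₁ ∈ ℂ with |ω₀|² + |ω₁|² = 1, let b := conj(ω₀)·e₀ + conj(ω₁)·e₁ and d := −ω₁·e₀ + ω₀·e₁, let Ω : ℝ → ℝ be continuous, Φ(t) := ∫₀^t Ω(s) ds, and H(t) := Ω(t)·(|e₂⟩⟨b| + |b⟩⟨e₂|). Define W(t) := |d⟩⟨d| + cos Φ(t)·(|b⟩⟨b| + |e₂⟩⟨e₂|) − i·sin Φ(t)·(|e₂⟩⟨b| + |b⟩⟨e₂|). Then W(0) = 1, W(t) is unitary for every t, and W is differentiable with i·W′(t) = H(t) ∘ W(t) for all t. -/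
/-!
With `X = |e₂⟩⟨b| + |b⟩⟨e₂|` one has `X* = X` and `X³ = X`, `X² = |b⟩⟨b| + |e₂⟩⟨e₂|`, and
`|d⟩⟨d| = 1 - X²` because `(d, b, e₂)` is an orthonormal basis of `ℂ³`. Hence `W(t) = R(Φ(t))`
for `R(θ) = 1 - X² + cos θ • X² - i sin θ • X`, which is `exp(-iθX)`. The addition formulas for
`cos` and `sin` give `R(θ + η) = R(θ) R(η)`, so `R(θ)* = R(-θ) = R(θ)⁻¹`; moreover
`R'(θ) = -i X R(θ)`, and the chain rule with `Φ' = Ω` turns this into `i W' = H W`.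
-/

/-- The rank-one operator `|u⟩⟨v| : x ↦ ⟨v, x⟩·u`. -/
noncomputable def ketbra {E : Type*} [NormedAddCommGroup E] [InnerProductSpace ℂ E]
    (u v : E) : E →L[ℂ] E :=
  (innerSL ℂ v).smulRight u

section RabiRotation

open Complex

variable {A : Type*} [Ring A] [Algebra ℂ A] (X : A)

noncomputable def rabiRotation (θ : ℝ) : A :=
  (1 - X * X) + (Real.cos θ : ℂ) • (X * X) - (I * Real.sin θ) • X

theorem rabiRotation_zero : rabiRotation X 0 = 1 := by
  simp [rabiRotation]

variable {X}

theorem rabiRotation_add (hX : X * X * X = X) (θ η : ℝ) :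
    rabiRotation X (θ + η) = rabiRotation X θ * rabiRotation X η := by
  have h4 : X * X * (X * X) = X * X := by rw [← mul_assoc, hX]
  have h3 : X * (X * X) = X := by rw [← mul_assoc, hX]
  simp only [rabiRotation, Real.cos_add, Real.sin_add, mul_add, add_mul, mul_sub, sub_mul,
    smul_mul_assoc, mul_smul_comm, one_mul, mul_one, h4, h3, hX]
  push_cast
  match_scalars
  · rfl
  · linear_combination -(sin θ * sin η) * I_sq
  · ring

theorem star_rabiRotation [StarRing A] [StarModule ℂ A] (hX : IsSelfAdjoint X) (θ : ℝ) :
    star (rabiRotation X θ) = rabiRotation X (-θ) := by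
  simp only [rabiRotation, star_add, star_sub, star_smul, star_one, star_mul, hX.star_eq,
    Real.cos_neg, Real.sin_neg, Complex.star_def, conj_ofReal, conj_I]
  push_cast
  module

theorem rabiRotation_mem_unitary [StarRing A] [StarModule ℂ A] (hXsa : IsSelfAdjoint X)
    (hX : X * X * X = X) (θ : ℝ) : rabiRotation X θ ∈ unitary A := by
  rw [Unitary.mem_iff, star_rabiRotation hXsa, ← rabiRotation_add hX, ← rabiRotation_add hX,
    neg_add_cancel, add_neg_cancel, rabiRotation_zero, and_self]

end RabiRotation

section RabiRotationDeriv

open Complex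

variable {A : Type*} [NormedRing A] [NormedAlgebra ℂ A] {X : A}

theorem hasDerivAt_rabiRotation (hX : X * X * X = X) (θ : ℝ) :
    HasDerivAt (rabiRotation X) (-I • (X * rabiRotation X θ)) θ := by
  have hcos := (Real.hasDerivAt_cos θ).ofReal_comp
  have hsin := ((Real.hasDerivAt_sin θ).ofReal_comp).const_mul I
  refine (((hcos.smul_const (X * X)).const_add (1 - X * X)).sub (hsin.smul_const X)).congr_deriv ?_
  simp only [rabiRotation, mul_add, mul_sub, mul_smul_comm, mul_one, hX, ← mul_assoc]
  push_cast
  match_scalars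
  · linear_combination -sin θ * I_sq
  · ring

end RabiRotationDeriv

open scoped InnerProductSpace

section Ketbra

open Complex

variable {E : Type*} [NormedAddCommGroup E] [InnerProductSpace ℂ E]

theorem ketbra_apply (u v x : E) : ketbra u v x = ⟪v, x⟫_ℂ • u := rfl

theorem ketbra_mul_ketbra (u v u' v' : E) :
    ketbra u v * ketbra u' v' = ⟪v, u'⟫_ℂ • ketbra u v' := by
  ext x
  simp only [mul_apply_eq_comp, ketbra_apply, smul_apply, inner_smul_right, smul_smul, mul_comm]

theorem adjoint_ketbra [CompleteSpace E] (u v : E) :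
    ContinuousLinearMap.adjoint (ketbra u v) = ketbra v u := by
  refine ((ContinuousLinearMap.eq_adjoint_iff _ _).mpr fun x y => ?_).symm
  simp only [ketbra_apply, inner_smul_left, inner_smul_right, inner_conj_symm, mul_comm]

theorem isSelfAdjoint_ketbra_add_ketbra [CompleteSpace E] (u v : E) :
    IsSelfAdjoint (ketbra u v + ketbra v u) := by
  rw [ContinuousLinearMap.isSelfAdjoint_iff', map_add, adjoint_ketbra, adjoint_ketbra, add_comm]

variable {u v : E}

theorem ketbra_add_ketbra_mul_self (hu : ‖u‖ = 1) (hv : ‖v‖ = 1) (huv : ⟪u, v⟫_ℂ = 0) :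
    (ketbra u v + ketbra v u) * (ketbra u v + ketbra v u) = ketbra u u + ketbra v v := by
  have hvu : ⟪v, u⟫_ℂ = 0 := inner_eq_zero_symm.mp huv
  simp only [mul_add, add_mul, ketbra_mul_ketbra, huv, hvu, inner_self_eq_norm_sq_to_K, hu, hv,
    ofReal_one, one_pow, one_smul, zero_smul, zero_add, add_zero, coe_algebraMap]
  exact add_comm _ _

theorem ketbra_add_ketbra_cube (hu : ‖u‖ = 1) (hv : ‖v‖ = 1) (huv : ⟪u, v⟫_ℂ = 0) :
    (ketbra u v + ketbra v u) * (ketbra u v + ketbra v u) * (ketbra u v + ketbra v u) =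
      ketbra u v + ketbra v u := by
  have hvu : ⟪v, u⟫_ℂ = 0 := inner_eq_zero_symm.mp huv
  simp only [ketbra_add_ketbra_mul_self hu hv huv, mul_add, add_mul, ketbra_mul_ketbra, huv, hvu,
    inner_self_eq_norm_sq_to_K, hu, hv]
  simp only [coe_algebraMap, ofReal_one, one_pow, one_smul, zero_smul, add_zero, add_comm]

theorem OrthonormalBasis.sum_ketbra_self {ι : Type*} [Fintype ι] (B : OrthonormalBasis ι ℂ E) :
    ∑ i, ketbra (B i) (B i) = 1 := by
  ext x
  simpa [ketbra_apply] using B.sum_repr' x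

end Ketbra

theorem orthonormal_dark_bright_excited {ω₀ ω₁ : ℂ} (hω : ‖ω₀‖ ^ 2 + ‖ω₁‖ ^ 2 = 1) :
    Orthonormal ℂ ![-ω₁ • EuclideanSpace.single 0 1 + ω₀ • EuclideanSpace.single 1 1,
      (starRingEnd ℂ) ω₀ • EuclideanSpace.single 0 1 +
        (starRingEnd ℂ) ω₁ • EuclideanSpace.single 1 1,
      (EuclideanSpace.single 2 1 : EuclideanSpace ℂ (Fin 3))] := by
  have hωℂ : (‖ω₀‖ : ℂ) ^ 2 + (‖ω₁‖ : ℂ) ^ 2 = 1 := by exact_mod_cast hω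
  rw [orthonormal_iff_ite]
  intro i j
  rw [PiLp.inner_apply, Fin.sum_univ_three]
  fin_cases i <;> fin_cases j <;> simp
  · linear_combination hωℂ
  · ring
  · ring
  · linear_combination hωℂ

open ContinuousLinearMap intervalIntegral in
/-- The explicit evolution operator `W(t)` of the three-level system with Hamiltonian
`H(t) = Ω(t)(|e₂⟩⟨b| + |b⟩⟨e₂|)` satisfies `W(0) = 1`, is unitary, and solves the operator
Schrödinger equation `i·W′(t) = H(t) ∘ W(t)`. -/
theorem three_level_evolution
    (ω₀ ω₁ : ℂ) (hω : ‖ω₀‖ ^ 2 + ‖ω₁‖ ^ 2 = 1)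
    (e : Fin 3 → EuclideanSpace ℂ (Fin 3)) (he : ∀ i, e i = EuclideanSpace.single i 1)
    (b d : EuclideanSpace ℂ (Fin 3))
    (hb : b = (starRingEnd ℂ) ω₀ • e 0 + (starRingEnd ℂ) ω₁ • e 1)
    (hd : d = -ω₁ • e 0 + ω₀ • e 1)
    (Ω : ℝ → ℝ) (hΩ : Continuous Ω)
    (Φ : ℝ → ℝ) (hΦ : ∀ t, Φ t = ∫ s in (0:ℝ)..t, Ω s)
    (Ham : ℝ → EuclideanSpace ℂ (Fin 3) →L[ℂ] EuclideanSpace ℂ (Fin 3))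
    (hHam : ∀ t, Ham t = (Ω t : ℂ) • (ketbra (e 2) b + ketbra b (e 2)))
    (W : ℝ → EuclideanSpace ℂ (Fin 3) →L[ℂ] EuclideanSpace ℂ (Fin 3))
    (hW : ∀ t, W t = ketbra d d
      + (Real.cos (Φ t) : ℂ) • (ketbra b b + ketbra (e 2) (e 2))
      - (Complex.I * (Real.sin (Φ t) : ℂ)) • (ketbra (e 2) b + ketbra b (e 2))) :
    W 0 = 1 ∧
    (∀ t, adjoint (W t) ∘L W t = 1 ∧ W t ∘L adjoint (W t) = 1) ∧
    (∀ t, ∃ D, HasDerivAt W D t ∧ Complex.I • D = Ham t ∘L W t) := by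
  have hon : Orthonormal ℂ ![d, b, e 2] := by
    rw [hd, hb, he, he, he]
    exact orthonormal_dark_bright_excited hω
  let B := (basisOfOrthonormalOfCardEqFinrank hon (by simp)).toOrthonormalBasis (by simpa using hon)
  have hsum : ketbra d d + ketbra b b + ketbra (e 2) (e 2) = 1 := by
    simpa [Fin.sum_univ_three, B] using B.sum_ketbra_self
  have he2 : ‖e 2‖ = 1 := by simpa using hon.1 2
  have hb1 : ‖b‖ = 1 := by simpa using hon.1 1
  have heb : ⟪e 2, b⟫_ℂ = 0 := by simpa using hon.2 (show (2 : Fin 3) ≠ 1 by decide)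
  set X := ketbra (e 2) b + ketbra b (e 2)
  have hX3 : X * X * X = X := ketbra_add_ketbra_cube he2 hb1 heb
  have hWX : ∀ t, W t = rabiRotation X (Φ t) := by
    intro t
    rw [hW, rabiRotation, ketbra_add_ketbra_mul_self he2 hb1 heb, add_comm (ketbra b b), ← hsum]
    abel
  refine ⟨?_, fun t => ?_, fun t => ?_⟩
  · rw [hWX, hΦ 0, integral_same, rabiRotation_zero]
  · rw [hWX, ← star_eq_adjoint, ← mul_def, ← mul_def]
    exact Unitary.mem_iff.mp (rabiRotation_mem_unitary (isSelfAdjoint_ketbra_add_ketbra _ _) hX3 _)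
  · have hΦ' : HasDerivAt Φ (Ω t) t := by
      rw [funext hΦ]
      exact (hΩ.integral_hasStrictDerivAt 0 t).hasDerivAt
    rw [show W = rabiRotation X ∘ Φ from funext hWX]
    refine ⟨_, (hasDerivAt_rabiRotation hX3 (Φ t)).scomp t hΦ', ?_⟩
    rw [hHam, Function.comp_apply, ← mul_def, smul_mul_assoc]
    match_scalars
    rw [Complex.coe_algebraMap]
    linear_combination -(Ω t : ℂ) * Complex.I_sq
end

section
/- Let 𝓗 be a finite-dimensional complex inner product space and E₁, …, E_n orthogonal projections on 𝓗 with E_j ∘ E_k = 0 for j ≠ k and Σ_j E_j = 1. For a unitary operator P and a bounded operator Q on 𝓗 define Ω_P(Q) := Σ_{j=1}^n E_j ∘ P⁻¹ ∘ Q ∘ E_j. Then for every unitary G commuting with each E_j, and for all P unitary and Q bounded, one has Ω_{P∘G}(Q∘G) = G⁻¹ ∘ Ω_P(Q) ∘ G. Moreover, if Q = P ∘ X with X an operator satisfying X = Σ_j E_j ∘ X ∘ E_j, then Ω_P(Q) = P⁻¹ ∘ Q. -/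
open ContinuousLinearMap in
/-- The canonical non-Abelian quantum connection `Ω_P(Q) = Σ_j E_j ∘ P⁻¹ ∘ Q ∘ E_j`
transforms equivariantly under the right action of the structure group, and reproduces
`P⁻¹ ∘ Q` on vertical vectors `Q = P ∘ X` with `X = Σ_j E_j ∘ X ∘ E_j`. -/
theorem canonical_connection_properties
    {𝓗 : Type*} [NormedAddCommGroup 𝓗] [InnerProductSpace ℂ 𝓗] [FiniteDimensional ℂ 𝓗]
    (n : ℕ) (E : Fin n → 𝓗 →L[ℂ] 𝓗)
    (hEsa : ∀ j, IsSelfAdjoint (E j))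
    (hEidem : ∀ j, E j ∘L E j = E j)
    (hEorth : ∀ j k, j ≠ k → E j ∘L E k = 0)
    (hEsum : ∑ j, E j = 1)
    (Conn : (𝓗 →L[ℂ] 𝓗) → (𝓗 →L[ℂ] 𝓗) → (𝓗 →L[ℂ] 𝓗))
    (hConn : ∀ P Q, Conn P Q = ∑ j, E j ∘L adjoint P ∘L Q ∘L E j) :
    (∀ P Q G : 𝓗 →L[ℂ] 𝓗,
      adjoint P ∘L P = 1 → P ∘L adjoint P = 1 →
      adjoint G ∘L G = 1 → G ∘L adjoint G = 1 →
      (∀ j, G ∘L E j = E j ∘L G) →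
      Conn (P ∘L G) (Q ∘L G) = adjoint G ∘L Conn P Q ∘L G) ∧
    (∀ P X : 𝓗 →L[ℂ] 𝓗,
      adjoint P ∘L P = 1 → P ∘L adjoint P = 1 →
      X = ∑ j, E j ∘L X ∘L E j →
      Conn P (P ∘L X) = adjoint P ∘L (P ∘L X)) := by
  constructor
  · intro P Q G hP1 hP2 hG1 hG2 hGE
    have hGE' : ∀ j, E j ∘L adjoint G = adjoint G ∘L E j := by
      intro j
      have h := congrArg ContinuousLinearMap.adjoint (hGE j)
      rwa [adjoint_comp, adjoint_comp, (hEsa j).adjoint_eq] at h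
    rw [hConn, hConn]
    simp only [← ContinuousLinearMap.mul_def]
    rw [Finset.sum_mul, Finset.mul_sum]
    refine Finset.sum_congr rfl fun j _ => ?_
    rw [show adjoint (P * G) = adjoint G * adjoint P from adjoint_comp P G]
    have h1 : E j * adjoint G = adjoint G * E j := hGE' j
    have h2 : G * E j = E j * G := hGE j
    calc E j * (adjoint G * adjoint P * (Q * G * E j))
        = (E j * adjoint G) * (adjoint P * (Q * (G * E j))) := by noncomm_ring
      _ = (adjoint G * E j) * (adjoint P * (Q * (E j * G))) := by rw [h1, h2]
      _ = adjoint G * (E j * (adjoint P * (Q * E j))) * G := by noncomm_ring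
  · intro P X hP1 hP2 hX
    rw [hConn]
    have key : ∀ j, E j ∘L adjoint P ∘L (P ∘L X) ∘L E j = E j ∘L X ∘L E j := by
      intro j
      simp only [← ContinuousLinearMap.mul_def]
      have : adjoint P * P = 1 := hP1
      calc E j * (adjoint P * (P * X * E j)) = E j * ((adjoint P * P) * X * E j) := by
            noncomm_ring
        _ = E j * (X * E j) := by rw [this]; noncomm_ring
        _ = E j * X * E j := by noncomm_ring
    simp only [key]
    calc (∑ j, E j ∘L X ∘L E j) = X := hX.symm
      _ = adjoint P ∘L (P ∘L X) := by
          show X = adjoint P * (P * X)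
          rw [← mul_assoc, show adjoint P * P = 1 from hP1, one_mul]
end

section
/- Let 𝓗 be a finite-dimensional complex inner product space and E₁, …, E_n orthogonal projections on 𝓗 with E_j ∘ E_k = 0 for j ≠ k and Σ_j E_j = 1. Let Γ : [0,T] → (𝓗 →L[ℂ] 𝓗) be differentiable with Γ(t) unitary for each t, define A(t) := Σ_j E_j ∘ Γ(t)⁻¹ ∘ Γ′(t) ∘ E_j, and let G : [0,T] → (𝓗 →L[ℂ] 𝓗) be the solution of G′(t) = −A(t) ∘ G(t) with G(0) = 1. Then for every t ∈ [0,T]: G(t) is unitary and commutes with each E_j, and the curve U(t) := Γ(t) ∘ G(t) is horizontal, i.e., Σ_j E_j ∘ U(t)⁻¹ ∘ U′(t) ∘ E_j = 0. -/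
/-!
The generator `A = Σ_j E_j Γ⁻¹ Γ' E_j` is the pinching of `Γ⁻¹ Γ'`, which is skew-adjoint
because `Γ` is unitary; the pinching keeps it skew-adjoint and makes it commute with every `E_j`.
For a solution of `G' = -A G` and any `X` commuting with `A`, the quantity `G* X G` has derivative
`G* (A X - X A) G = 0`, so it is conserved: `X = 1` gives `G* G = 1` (hence unitarity, in finite
dimension), and `X = E_j` gives `G* E_j G = E_j`, i.e. `G` commutes with `E_j`. Finally
`U = Γ G` has `E_j U* U' E_j = G* (E_j Γ⁻¹ Γ' E_j - E_j A E_j) G`, which vanishes because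
`E_j A E_j = E_j Γ⁻¹ Γ' E_j`.
-/

open Set

instance ContinuousLinearMap.isDedekindFiniteMonoid {R M : Type*} [Semiring R]
    [IsStablyFiniteRing R] [TopologicalSpace M] [AddCommMonoid M] [ContinuousAdd M] [Module R M]
    [Module.Free R M] [Module.Finite R M] : IsDedekindFiniteMonoid (M →L[R] M) :=
  .of_injective ContinuousLinearMap.toLinearMapRingHom ContinuousLinearMap.coe_injective

theorem eq_of_hasDerivAt_zero_Icc {E : Type*} [NormedAddCommGroup E] [NormedSpace ℝ E]
    {f : ℝ → E} {a b : ℝ} (hf : ∀ x ∈ Icc a b, HasDerivAt f 0 x) :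
    ∀ x ∈ Icc a b, f x = f a :=
  constant_of_has_deriv_right_zero (fun x hx => (hf x hx).continuousAt.continuousWithinAt)
    fun x hx => (hf x (Ico_subset_Icc_self hx)).hasDerivWithinAt

section Pinching

variable {ι R : Type*} [Fintype ι]

def pinching [NonUnitalNonAssocSemiring R] (E : ι → R) (b : R) : R := ∑ j, E j * b * E j

theorem pinching_neg [NonUnitalNonAssocRing R] (E : ι → R) (b : R) :
    pinching E (-b) = -pinching E b := by
  simp only [pinching, mul_neg, neg_mul, Finset.sum_neg_distrib]

theorem star_pinching [NonUnitalSemiring R] [StarRing R] {E : ι → R}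
    (hE : ∀ j, IsSelfAdjoint (E j)) (b : R) : star (pinching E b) = pinching E (star b) := by
  simp only [pinching, star_sum, star_mul, (hE _).star_eq, mul_assoc]

namespace OrthogonalIdempotents

variable [Semiring R] {E : ι → R} (hE : OrthogonalIdempotents E) (b : R) (j : ι)
include hE

theorem mul_pinching : E j * pinching E b = E j * b * E j := by
  rw [pinching, Finset.mul_sum, Finset.sum_eq_single j]
  · rw [← mul_assoc, ← mul_assoc, (hE.idem j).eq]
  · intro k _ hkj
    rw [← mul_assoc, ← mul_assoc, hE.ortho hkj.symm, zero_mul, zero_mul]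
  · simp

theorem pinching_mul : pinching E b * E j = E j * b * E j := by
  rw [pinching, Finset.sum_mul, Finset.sum_eq_single j]
  · rw [mul_assoc, (hE.idem j).eq]
  · intro k _ hkj
    rw [mul_assoc, hE.ortho hkj, mul_zero]
  · simp

theorem commute_pinching : Commute (pinching E b) (E j) :=
  (hE.pinching_mul b j).trans (hE.mul_pinching b j).symm

theorem mul_pinching_mul : E j * pinching E b * E j = E j * b * E j := by
  rw [hE.mul_pinching, mul_assoc, (hE.idem j).eq]

end OrthogonalIdempotents

end Pinching

theorem commute_of_star_mul_mul_eq {R : Type*} [Monoid R] [StarMul R] {g x : R}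
    (hg : g * star g = 1) (hx : star g * x * g = x) : Commute g x :=
  calc g * x = g * (star g * x * g) := by rw [hx]
    _ = (g * star g) * x * g := by simp only [mul_assoc]
    _ = x * g := by rw [hg, one_mul]

theorem horizontal_of_mul_mul_eq {R : Type*} [Ring R] [StarRing R] {e u u' g a : R}
    (hu : star u * u = 1) (hg : Commute g e) (hsg : Commute (star g) e)
    (hea : e * a * e = e * (star u * u') * e) :
    e * (star (u * g) * ((u' * g + u * -(a * g)) * e)) = 0 :=
  calc e * (star (u * g) * ((u' * g + u * -(a * g)) * e))
      = (e * star g) * (star u * u' - (star u * u) * a) * (g * e) := by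
        rw [star_mul]; noncomm_ring
    _ = star g * (e * (star u * u') * e - e * a * e) * g := by
        rw [hu, one_mul, ← hsg.eq, hg.eq]; noncomm_ring
    _ = 0 := by rw [hea, sub_self, mul_zero, zero_mul]

section Curves

variable {R : Type*} [NormedRing R] [NormedAlgebra ℝ R] [StarRing R] [StarModule ℝ R]
  [ContinuousStar R] {a b : ℝ}

theorem star_star_mul_deriv_eq_neg {Γ Γ' : ℝ → R} (hab : a < b)
    (hΓ : ∀ s ∈ Icc a b, HasDerivAt Γ (Γ' s) s)
    (huni : ∀ s ∈ Icc a b, star (Γ s) * Γ s = 1) {t : ℝ} (ht : t ∈ Icc a b) :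
    star (star (Γ t) * Γ' t) = -(star (Γ t) * Γ' t) := by
  have hprod : HasDerivWithinAt (fun s => star (Γ s) * Γ s)
      (star (Γ' t) * Γ t + star (Γ t) * Γ' t) (Icc a b) t :=
    ((hΓ t ht).star.mul (hΓ t ht)).hasDerivWithinAt
  have hconst : HasDerivWithinAt (fun s => star (Γ s) * Γ s) 0 (Icc a b) t :=
    (hasDerivWithinAt_const t _ 1).congr huni (huni t ht)
  rw [star_mul, star_star]
  exact eq_neg_of_add_eq_zero_left ((uniqueDiffOn_Icc hab t ht).eq_deriv _ hprod hconst)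

theorem star_mul_mul_eq_of_hasDerivAt_eq_neg_mul {G G' A : ℝ → R} {X : R}
    (hG : ∀ s ∈ Icc a b, HasDerivAt G (G' s) s) (hode : ∀ s ∈ Icc a b, G' s = -(A s * G s))
    (hA : ∀ s ∈ Icc a b, star (A s) = -A s) (hX : ∀ s ∈ Icc a b, Commute (A s) X) :
    ∀ t ∈ Icc a b, star (G t) * X * G t = star (G a) * X * G a := by
  refine eq_of_hasDerivAt_zero_Icc fun s hs => ?_
  refine (((hG s hs).star.mul_const X).mul (hG s hs)).congr_deriv ?_
  calc star (G' s) * X * G s + star (G s) * X * G' s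
      = star (G s) * (A s * X - X * A s) * G s := by
        rw [hode s hs, star_neg, star_mul, hA s hs]; noncomm_ring
    _ = 0 := by rw [(hX s hs).eq, sub_self, mul_zero, zero_mul]

end Curves

open ContinuousLinearMap in
theorem horizontal_lift_exists_general
    {𝓗 : Type*} [NormedAddCommGroup 𝓗] [InnerProductSpace ℂ 𝓗] [FiniteDimensional ℂ 𝓗]
    (n : ℕ) (E : Fin n → 𝓗 →L[ℂ] 𝓗)
    (hEsa : ∀ j, IsSelfAdjoint (E j))
    (hEidem : ∀ j, E j ∘L E j = E j)
    (hEorth : ∀ j k, j ≠ k → E j ∘L E k = 0)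
    (T : ℝ) (hT : 0 < T)
    (Γ Γ' : ℝ → 𝓗 →L[ℂ] 𝓗)
    (hΓuni : ∀ t ∈ Set.Icc (0:ℝ) T, adjoint (Γ t) ∘L Γ t = 1 ∧ Γ t ∘L adjoint (Γ t) = 1)
    (hΓderiv : ∀ t ∈ Set.Icc (0:ℝ) T, HasDerivAt Γ (Γ' t) t)
    (A : ℝ → 𝓗 →L[ℂ] 𝓗)
    (hA : ∀ t, A t = ∑ j, E j ∘L adjoint (Γ t) ∘L Γ' t ∘L E j)
    (G G' : ℝ → 𝓗 →L[ℂ] 𝓗)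
    (hG0 : G 0 = 1)
    (hGderiv : ∀ t ∈ Set.Icc (0:ℝ) T, HasDerivAt G (G' t) t)
    (hGode : ∀ t ∈ Set.Icc (0:ℝ) T, G' t = -(A t ∘L G t)) :
    ∀ t ∈ Set.Icc (0:ℝ) T,
      (adjoint (G t) ∘L G t = 1 ∧ G t ∘L adjoint (G t) = 1) ∧
      (∀ j, G t ∘L E j = E j ∘L G t) ∧
      (∃ D : 𝓗 →L[ℂ] 𝓗, HasDerivAt (fun s => Γ s ∘L G s) D t ∧
        ∑ j, E j ∘L adjoint (Γ t ∘L G t) ∘L D ∘L E j = 0) := by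
  intro t ht
  have hE : OrthogonalIdempotents E := ⟨hEidem, fun j k hjk => hEorth j k hjk⟩
  have hA_eq : ∀ s, A s = pinching E (star (Γ s) * Γ' s) := fun s => by
    simp only [hA, pinching, mul_assoc]; rfl
  have hA_skew : ∀ s ∈ Icc 0 T, star (A s) = -A s := fun s hs => by
    rw [hA_eq, star_pinching hEsa, star_star_mul_deriv_eq_neg hT hΓderiv
      (fun r hr => (hΓuni r hr).1) hs, pinching_neg]
  have hconj : ∀ X, (∀ s ∈ Icc 0 T, Commute (A s) X) → star (G t) * X * G t = X := by
    intro X hX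
    have := star_mul_mul_eq_of_hasDerivAt_eq_neg_mul hGderiv hGode hA_skew hX t ht
    rwa [hG0, star_one, one_mul, mul_one] at this
  have hGG : star (G t) * G t = 1 := by
    simpa only [mul_one] using hconj 1 fun s _ => Commute.one_right _
  have hGG' : G t * star (G t) = 1 := mul_eq_one_comm.mp hGG
  have hGE : ∀ j, Commute (G t) (E j) := fun j => commute_of_star_mul_mul_eq hGG'
    (hconj (E j) fun s _ => by rw [hA_eq s]; exact hE.commute_pinching _ j)
  have hGsE : ∀ j, Commute (star (G t)) (E j) := fun j => by
    simpa only [(hEsa j).star_eq] using (hGE j).star_star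
  refine ⟨⟨hGG, hGG'⟩, fun j => (hGE j).eq, _, (hΓderiv t ht).mul (hGderiv t ht),
    Finset.sum_eq_zero fun j _ => ?_⟩
  have hpinch := hE.mul_pinching_mul (star (Γ t) * Γ' t) j
  rw [← hA_eq] at hpinch
  rw [hGode t ht]
  exact horizontal_of_mul_mul_eq (hΓuni t ht).1 (hGE j) (hGsE j) hpinch

open ContinuousLinearMap in
/-- Existence of horizontal lifts: if `G` solves `G′ = −A∘G`, `G(0) = 1`, with
`A(t) = Σ_j E_j ∘ Γ(t)⁻¹ ∘ Γ′(t) ∘ E_j`, then `G(t)` is unitary, commutes with each `E_j`,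
and `U(t) := Γ(t) ∘ G(t)` is horizontal for the canonical connection. -/
theorem horizontal_lift_exists
    {𝓗 : Type*} [NormedAddCommGroup 𝓗] [InnerProductSpace ℂ 𝓗] [FiniteDimensional ℂ 𝓗]
    (n : ℕ) (E : Fin n → 𝓗 →L[ℂ] 𝓗)
    (hEsa : ∀ j, IsSelfAdjoint (E j))
    (hEidem : ∀ j, E j ∘L E j = E j)
    (hEorth : ∀ j k, j ≠ k → E j ∘L E k = 0)
    (hEsum : ∑ j, E j = 1)
    (T : ℝ) (hT : 0 < T)
    (Γ Γ' : ℝ → 𝓗 →L[ℂ] 𝓗)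
    (hΓuni : ∀ t ∈ Set.Icc (0:ℝ) T, adjoint (Γ t) ∘L Γ t = 1 ∧ Γ t ∘L adjoint (Γ t) = 1)
    (hΓderiv : ∀ t ∈ Set.Icc (0:ℝ) T, HasDerivAt Γ (Γ' t) t)
    (A : ℝ → 𝓗 →L[ℂ] 𝓗)
    (hA : ∀ t, A t = ∑ j, E j ∘L adjoint (Γ t) ∘L Γ' t ∘L E j)
    (G G' : ℝ → 𝓗 →L[ℂ] 𝓗)
    (hG0 : G 0 = 1)
    (hGderiv : ∀ t ∈ Set.Icc (0:ℝ) T, HasDerivAt G (G' t) t)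
    (hGode : ∀ t ∈ Set.Icc (0:ℝ) T, G' t = -(A t ∘L G t)) :
    ∀ t ∈ Set.Icc (0:ℝ) T,
      (adjoint (G t) ∘L G t = 1 ∧ G t ∘L adjoint (G t) = 1) ∧
      (∀ j, G t ∘L E j = E j ∘L G t) ∧
      (∃ D : 𝓗 →L[ℂ] 𝓗, HasDerivAt (fun s => Γ s ∘L G s) D t ∧
        ∑ j, E j ∘L adjoint (Γ t ∘L G t) ∘L D ∘L E j = 0) :=
  horizontal_lift_exists_general n E hEsa hEidem hEorth T hT Γ Γ' hΓuni hΓderiv A hA G G' hG0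
    hGderiv hGode
end

section
/- Let 𝓗 be a finite-dimensional complex inner product space and E₁, …, E_n orthogonal projections on 𝓗 with E_j ∘ E_k = 0 for j ≠ k and Σ_j E_j = 1. Let U₁, U₂ : [0,T] → (𝓗 →L[ℂ] 𝓗) be differentiable curves of unitary operators with U₁(0) = U₂(0), such that U₂(t) = U₁(t) ∘ K(t) where K : [0,T] → (𝓗 →L[ℂ] 𝓗) is differentiable, K(t) is unitary, and K(t) commutes with each E_j for every t. If both curves are horizontal, i.e., Σ_j E_j ∘ U_i(t)⁻¹ ∘ U_i′(t) ∘ E_j = 0 for i = 1, 2 and all t ∈ [0,T], then U₁(t) = U₂(t) for all t ∈ [0,T]. -/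
set_option maxHeartbeats 2000000

private lemma horlift_deriv_zero {M : Type*} [NormedAddCommGroup M] [NormedSpace ℝ M]
    {f : ℝ → M} {f' : M} {T t : ℝ} (hT : 0 < T) (ht : t ∈ Set.Icc (0:ℝ) T)
    (hd : HasDerivAt f f' t) (h0 : ∀ s ∈ Set.Icc (0:ℝ) T, f s = 0) : f' = 0 := by
  have h1 : HasDerivWithinAt f f' (Set.Icc 0 T) t := hd.hasDerivWithinAt
  have h2 : HasDerivWithinAt f 0 (Set.Icc 0 T) t :=
    (hasDerivWithinAt_const t _ (0:M)).congr h0 (h0 t ht)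
  have hu := (uniqueDiffOn_Icc hT) t ht
  have heq := hu.eq h1.hasFDerivWithinAt h2.hasFDerivWithinAt
  have := congrArg (fun L : ℝ →L[ℝ] M => L 1) heq
  simpa using this

private lemma horlift_aux {R : Type*} [Ring R] (e AK Kt Kt' AV V V' : R)
    (hAVV : AV * V = 1) (hKe : Kt * e = e * Kt) (hAKe : AK * e = e * AK)
    (hK'e : Kt' * e = e * Kt') (hee : e * e = e) :
    e * (AK * (AV * ((V' * Kt + V * Kt') * e)))
      = AK * (e * (AV * (V' * e)) * Kt) + e * (AK * Kt') := by
  have t1 : e * (AK * (AV * (V' * (Kt * e)))) = AK * (e * (AV * (V' * e)) * Kt) := by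
    rw [hKe]
    calc e * (AK * (AV * (V' * (e * Kt))))
        = (e * AK) * (AV * (V' * e) * Kt) := by simp only [mul_assoc]
      _ = (AK * e) * (AV * (V' * e) * Kt) := by rw [hAKe]
      _ = AK * (e * (AV * (V' * e)) * Kt) := by simp only [mul_assoc]
  have t2 : e * (AK * (AV * (V * (Kt' * e)))) = e * (AK * Kt') := by
    rw [hK'e, ← mul_assoc AV V, hAVV, one_mul]
    calc e * (AK * (e * Kt')) = e * ((AK * e) * Kt') := by simp only [mul_assoc]
      _ = e * ((e * AK) * Kt') := by rw [hAKe]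
      _ = (e * e) * (AK * Kt') := by simp only [mul_assoc]
      _ = e * (AK * Kt') := by rw [hee]
  calc e * (AK * (AV * ((V' * Kt + V * Kt') * e)))
      = e * (AK * (AV * (V' * (Kt * e)))) + e * (AK * (AV * (V * (Kt' * e)))) := by
        simp only [add_mul, mul_add, mul_assoc]
    _ = AK * (e * (AV * (V' * e)) * Kt) + e * (AK * Kt') := by rw [t1, t2]

open ContinuousLinearMap in
/-- Uniqueness of horizontal lifts: two horizontal curves of unitaries with the same
initial point, differing by a differentiable curve of unitaries commuting with the
projections `E_j`, coincide. -/
theorem horizontal_lift_unique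
    {𝓗 : Type*} [NormedAddCommGroup 𝓗] [InnerProductSpace ℂ 𝓗] [FiniteDimensional ℂ 𝓗]
    (n : ℕ) (E : Fin n → 𝓗 →L[ℂ] 𝓗)
    (hEsa : ∀ j, IsSelfAdjoint (E j))
    (hEidem : ∀ j, E j ∘L E j = E j)
    (hEorth : ∀ j k, j ≠ k → E j ∘L E k = 0)
    (hEsum : ∑ j, E j = 1)
    (T : ℝ) (hT : 0 < T)
    (U₁ U₁' U₂ U₂' K K' : ℝ → 𝓗 →L[ℂ] 𝓗)
    (hU₁uni : ∀ t ∈ Set.Icc (0:ℝ) T, adjoint (U₁ t) ∘L U₁ t = 1 ∧ U₁ t ∘L adjoint (U₁ t) = 1)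
    (hU₂uni : ∀ t ∈ Set.Icc (0:ℝ) T, adjoint (U₂ t) ∘L U₂ t = 1 ∧ U₂ t ∘L adjoint (U₂ t) = 1)
    (hU₁deriv : ∀ t ∈ Set.Icc (0:ℝ) T, HasDerivAt U₁ (U₁' t) t)
    (hU₂deriv : ∀ t ∈ Set.Icc (0:ℝ) T, HasDerivAt U₂ (U₂' t) t)
    (hinit : U₁ 0 = U₂ 0)
    (hKuni : ∀ t ∈ Set.Icc (0:ℝ) T, adjoint (K t) ∘L K t = 1 ∧ K t ∘L adjoint (K t) = 1)
    (hKderiv : ∀ t ∈ Set.Icc (0:ℝ) T, HasDerivAt K (K' t) t)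
    (hKcomm : ∀ t ∈ Set.Icc (0:ℝ) T, ∀ j, K t ∘L E j = E j ∘L K t)
    (hfactor : ∀ t ∈ Set.Icc (0:ℝ) T, U₂ t = U₁ t ∘L K t)
    (hhor₁ : ∀ t ∈ Set.Icc (0:ℝ) T, ∑ j, E j ∘L adjoint (U₁ t) ∘L U₁' t ∘L E j = 0)
    (hhor₂ : ∀ t ∈ Set.Icc (0:ℝ) T, ∑ j, E j ∘L adjoint (U₂ t) ∘L U₂' t ∘L E j = 0) :
    ∀ t ∈ Set.Icc (0:ℝ) T, U₁ t = U₂ t := by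
  have h0T : (0:ℝ) ∈ Set.Icc (0:ℝ) T := ⟨le_refl 0, hT.le⟩
  have hEadj : ∀ j, adjoint (E j) = E j := fun j => by
    rw [← star_eq_adjoint]; exact hEsa j
  -- K' vanishes on the interval
  have hK'zero : ∀ t ∈ Set.Icc (0:ℝ) T, K' t = 0 := by
    intro t ht
    -- K' commutes with each E j
    have hK'comm : ∀ j, K' t * E j = E j * K' t := by
      intro j
      have hd : HasDerivAt (fun s => K s * E j - E j * K s)
          ((K' t * E j + K t * 0) - (0 * K t + E j * K' t)) t :=
        ((hKderiv t ht).mul (hasDerivAt_const t (E j))).sub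
          ((hasDerivAt_const t (E j)).mul (hKderiv t ht))
      have hz := horlift_deriv_zero hT ht hd (fun s hs => by
        have h := hKcomm s hs j
        simp only [mul_def]
        rw [h, sub_self])
      have hz' : K' t * E j - E j * K' t = 0 := by
        rw [mul_zero, zero_mul, add_zero, zero_add] at hz; exact hz
      exact sub_eq_zero.mp hz'
    -- adjoint of K commutes with each E j
    have hAKcomm : ∀ j, adjoint (K t) * E j = E j * adjoint (K t) := by
      intro j
      have h2 := congrArg adjoint (hKcomm t ht j)
      rw [adjoint_comp, adjoint_comp, hEadj j] at h2
      simp only [mul_def]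
      exact h2.symm
    -- product rule identity for U₂'
    have hprod : U₂' t = U₁' t * K t + U₁ t * K' t := by
      have hd : HasDerivAt (fun s => U₂ s - U₁ s * K s)
          (U₂' t - (U₁' t * K t + U₁ t * K' t)) t :=
        (hU₂deriv t ht).sub ((hU₁deriv t ht).mul (hKderiv t ht))
      have hz := horlift_deriv_zero hT ht hd (fun s hs => by
        have h := hfactor s hs
        simp only [mul_def]
        rw [← h, sub_self])
      exact sub_eq_zero.mp hz
    -- adjoint of U₂
    have hAU₂ : adjoint (U₂ t) = adjoint (K t) * adjoint (U₁ t) := by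
      rw [hfactor t ht, adjoint_comp, mul_def]
    -- the key computation: adjoint (K t) * K' t = 0
    have hkey : adjoint (K t) * K' t = 0 := by
      have hsum := hhor₂ t ht
      simp only [← mul_def] at hsum
      rw [show (∑ j, E j * (adjoint (U₂ t) * (U₂' t * E j)))
            = ∑ j, (adjoint (K t) * (E j * (adjoint (U₁ t) * (U₁' t * E j)) * K t)
                + E j * (adjoint (K t) * K' t)) from ?_] at hsum
      · rw [Finset.sum_add_distrib, ← Finset.mul_sum, ← Finset.sum_mul,
          ← Finset.sum_mul] at hsum
        have h1 : (∑ j, E j * (adjoint (U₁ t) * (U₁' t * E j))) = 0 := by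
          have := hhor₁ t ht
          simpa only [← mul_def] using this
        rw [h1, hEsum, zero_mul, mul_zero, zero_add, one_mul] at hsum
        exact hsum
      · refine Finset.sum_congr rfl fun j _ => ?_
        rw [hAU₂, hprod]
        have haux := horlift_aux (E j) (adjoint (K t)) (K t) (K' t)
          (adjoint (U₁ t)) (U₁ t) (U₁' t)
          (by have := (hU₁uni t ht).1; simpa only [← mul_def] using this)
          (by have := hKcomm t ht j; simpa only [← mul_def] using this)
          (hAKcomm j) (hK'comm j)
          (by have := hEidem j; simpa only [← mul_def] using this)
        calc E j * (adjoint (K t) * adjoint (U₁ t) * ((U₁' t * K t + U₁ t * K' t) * E j))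
            = E j * (adjoint (K t) * (adjoint (U₁ t)
                * ((U₁' t * K t + U₁ t * K' t) * E j))) := by
              simp only [mul_assoc]
          _ = adjoint (K t) * (E j * (adjoint (U₁ t) * (U₁' t * E j)) * K t)
                + E j * (adjoint (K t) * K' t) := haux
    have hKK : K t * adjoint (K t) = (1 : 𝓗 →L[ℂ] 𝓗) := by
      have := (hKuni t ht).2; simpa only [← mul_def] using this
    calc K' t = 1 * K' t := (one_mul _).symm
      _ = (K t * adjoint (K t)) * K' t := by rw [hKK]
      _ = K t * (adjoint (K t) * K' t) := by rw [mul_assoc]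
      _ = 0 := by rw [hkey, mul_zero]
  -- K 0 = 1
  have hK0 : K 0 = 1 := by
    have h : U₁ 0 * K 0 = U₁ 0 := by
      have := hfactor 0 h0T
      rw [← hinit] at this
      simpa only [← mul_def] using this.symm
    have hA : adjoint (U₁ 0) * U₁ 0 = 1 := by
      have := (hU₁uni 0 h0T).1; simpa only [← mul_def] using this
    calc K 0 = 1 * K 0 := (one_mul _).symm
      _ = (adjoint (U₁ 0) * U₁ 0) * K 0 := by rw [hA]
      _ = adjoint (U₁ 0) * (U₁ 0 * K 0) := by rw [mul_assoc]
      _ = adjoint (U₁ 0) * U₁ 0 := by rw [h]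
      _ = 1 := hA
  -- K is constant equal to 1 on the interval
  have hKconst : ∀ t ∈ Set.Icc (0:ℝ) T, K t = 1 := by
    have hcont : ContinuousOn K (Set.Icc 0 T) := fun s hs =>
      ((hKderiv s hs).continuousAt).continuousWithinAt
    have hder : ∀ x ∈ Set.Ico (0:ℝ) T, HasDerivWithinAt K 0 (Set.Ici x) x := by
      intro x hx
      have hx' : x ∈ Set.Icc (0:ℝ) T := ⟨hx.1, hx.2.le⟩
      have := (hKderiv x hx').hasDerivWithinAt (s := Set.Ici x)
      rwa [hK'zero x hx'] at this
    intro t ht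
    rw [constant_of_has_deriv_right_zero hcont hder t ht, hK0]
  intro t ht
  rw [hfactor t ht, hKconst t ht, ← mul_def, mul_one]
end

section
/- (State-evolution analogue of Proposition 2.1.) Let 𝓗 be a finite-dimensional complex inner product space, H : ℝ → (𝓗 →L[ℂ] 𝓗) continuous with each H(t) self-adjoint, and U : ℝ → (𝓗 →L[ℂ] 𝓗) differentiable with U(0) = 1, U(t) unitary, and i·U′(t) = H(t) ∘ U(t). Let ψ₁, …, ψ_m ∈ 𝓗 be orthonormal, set ψ_k(t) := U(t) ψ_k, let C(t)_{p k} := −⟨U(t)ψ_p, H(t) U(t)ψ_k⟩, let Ṽ solve i·Ṽ′(t) = C(t)·Ṽ(t) with Ṽ(0) = 1, and define ψ̃_k(t) := Σ_{p=1}^m Ṽ(t)_{p k} · ψ_p(t). Then ⟨ψ̃_p(t), (d/dt)ψ̃_k(t)⟩ = 0 for all 1 ≤ p, k ≤ m and all t. -/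
/-!
Write `φ_q = U(t)ψ_q`. Then `ψ̃_k' = Σ_r (Ṽ_{rk} φ_r' + Ṽ'_{rk} φ_r)`, and since the `φ_r` stay
orthonormal, `⟪φ_q, ψ̃_k'⟫ = (AṼ)_{qk} + Ṽ'_{qk}` with `A_{qr} = ⟪φ_q, φ_r'⟫`. The Schrödinger
equation gives `A = iC`, so the equation `iṼ' = CṼ` says exactly `Ṽ' = -AṼ`: the derivative
`ψ̃_k'` is orthogonal to every `φ_q`, hence to every `ψ̃_p`.
-/

open ContinuousLinearMap

theorem HasDerivAt.clm_apply_const {E F : Type*} [NormedAddCommGroup E] [NormedSpace ℂ E]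
    [NormedAddCommGroup F] [NormedSpace ℂ F] {U : ℝ → E →L[ℂ] F} {U' : E →L[ℂ] F} {t : ℝ}
    (hU : HasDerivAt U U' t) (x : E) : HasDerivAt (fun s => U s x) (U' x) t :=
  ((apply ℂ F x).restrictScalars ℝ).hasFDerivAt.comp_hasDerivAt t hU

theorem HasDerivAt.fun_sum_smul {𝕜 𝕜' E ι : Type*} [NontriviallyNormedField 𝕜] [NormedField 𝕜']
    [NormedAlgebra 𝕜 𝕜'] [NormedAddCommGroup E] [NormedSpace 𝕜 E] [NormedSpace 𝕜' E]
    [IsScalarTower 𝕜 𝕜' E] [Fintype ι] {c : ι → 𝕜 → 𝕜'} {c' : ι → 𝕜'} {f : ι → 𝕜 → E}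
    {f' : ι → E} {t : 𝕜} (hc : ∀ i, HasDerivAt (c i) (c' i) t)
    (hf : ∀ i, HasDerivAt (f i) (f' i) t) :
    HasDerivAt (fun s => ∑ i, c i s • f i s) (∑ i, (c i t • f' i + c' i • f i t)) t :=
  HasDerivAt.fun_sum fun i _ => (hc i).smul (hf i)

section InnerProductSpace

variable {𝕜 E ι : Type*} [RCLike 𝕜] [NormedAddCommGroup E] [InnerProductSpace 𝕜 E]

theorem Orthonormal.map_of_adjoint_comp_self_eq_one {F : Type*} [NormedAddCommGroup F]
    [InnerProductSpace 𝕜 F] [CompleteSpace E] [CompleteSpace F] {v : ι → E}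
    (hv : Orthonormal 𝕜 v) {U : E →L[𝕜] F} (hU : adjoint U ∘L U = 1) :
    Orthonormal 𝕜 fun i => U (v i) :=
  hv.comp_linearIsometry <| U.toLinearMap.isometryOfInner fun x y => by
    change inner 𝕜 (U x) (U y) = _
    rw [← adjoint_inner_right, ← comp_apply, hU]; rfl

/-- The Berry connection of the moving frame `φ` with velocity `φ'`. -/
def connectionMatrix (φ φ' : ι → E) : Matrix ι ι 𝕜 :=
  Matrix.of fun q r => inner 𝕜 (φ q) (φ' r)

variable [Fintype ι]

theorem Orthonormal.inner_sum_smul_add_smul_eq_zero {φ φ' : ι → E} (hφ : Orthonormal 𝕜 φ)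
    {V V' : Matrix ι ι 𝕜} (hV' : V' = -(connectionMatrix φ φ' * V)) (c : ι → 𝕜) (k : ι) :
    inner 𝕜 (∑ q, c q • φ q) (∑ r, (V r k • φ' r + V' r k • φ r)) = 0 := by
  classical
  have horth (q : ι) : inner 𝕜 (φ q) (∑ r, (V r k • φ' r + V' r k • φ r)) = 0 := by
    simp [inner_sum, inner_add_right, inner_smul_right, orthonormal_iff_ite.mp hφ, hV',
      Matrix.mul_apply, connectionMatrix, mul_comm, Finset.sum_add_distrib]
  simp [sum_inner, inner_smul_left, horth]

end InnerProductSpace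

open ContinuousLinearMap in
theorem state_parallel_transport_condition_general
    {𝓗 : Type*} [NormedAddCommGroup 𝓗] [InnerProductSpace ℂ 𝓗] [FiniteDimensional ℂ 𝓗]
    (Ham : ℝ → 𝓗 →L[ℂ] 𝓗)
    (U U' : ℝ → 𝓗 →L[ℂ] 𝓗)
    (hUuni : ∀ t, adjoint (U t) ∘L U t = 1 ∧ U t ∘L adjoint (U t) = 1)
    (hUderiv : ∀ t, HasDerivAt U (U' t) t)
    (hSch : ∀ t, Complex.I • U' t = Ham t ∘L U t)
    (m : ℕ) (ψ : Fin m → 𝓗) (hψ : Orthonormal ℂ ψ)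
    (C : ℝ → Matrix (Fin m) (Fin m) ℂ)
    (hC : ∀ t p k, C t p k = -(inner ℂ (U t (ψ p)) (Ham t (U t (ψ k))) : ℂ))
    (V V' : ℝ → Matrix (Fin m) (Fin m) ℂ)
    (hVderiv : ∀ t p k, HasDerivAt (fun s => V s p k) (V' t p k) t)
    (hVode : ∀ t, Complex.I • V' t = C t * V t)
    (ψtil : Fin m → ℝ → 𝓗)
    (hψtil : ∀ k t, ψtil k t = ∑ p, V t p k • U t (ψ p)) :
    ∀ t, ∀ p k, ∃ v : 𝓗,
      HasDerivAt (ψtil k) v t ∧ (inner ℂ (ψtil p t) v : ℂ) = 0 := by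
  intro t p k
  have hU' : U' t = Complex.I⁻¹ • (Ham t ∘L U t) :=
    (eq_inv_smul_iff₀ Complex.I_ne_zero).2 (hSch t)
  have hconn : connectionMatrix (fun q => U t (ψ q)) (fun q => U' t (ψ q)) =
      -(Complex.I⁻¹ • C t) := by
    ext q r
    simp [connectionMatrix, hU', inner_smul_right, hC]
  have hV' : V' t = -(connectionMatrix (fun q => U t (ψ q)) (fun q => U' t (ψ q)) * V t) := by
    rw [hconn, neg_mul, neg_neg, Matrix.smul_mul]
    exact (eq_inv_smul_iff₀ Complex.I_ne_zero).2 (hVode t)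
  refine ⟨∑ q, (V t q k • U' t (ψ q) + V' t q k • U t (ψ q)), ?_, ?_⟩
  · rw [show ψtil k = _ from funext (hψtil k)]
    exact .fun_sum_smul (fun q => hVderiv t q k) fun q => (hUderiv t).clm_apply_const (ψ q)
  · rw [hψtil]
    exact (hψ.map_of_adjoint_comp_self_eq_one (hUuni t).1).inner_sum_smul_add_smul_eq_zero hV' _ k

open ContinuousLinearMap in
/-- State-evolution analogue of Proposition 2.1: with `ψ_k(t) = U(t)ψ_k` and
`C(t)_{pk} = −⟨U(t)ψ_p, H(t)U(t)ψ_k⟩`, the vectors `ψ̃_k(t) = Σ_p Ṽ(t)_{pk}·ψ_p(t)`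
satisfy `⟨ψ̃_p(t), (d/dt)ψ̃_k(t)⟩ = 0`. -/
theorem state_parallel_transport_condition
    {𝓗 : Type*} [NormedAddCommGroup 𝓗] [InnerProductSpace ℂ 𝓗] [FiniteDimensional ℂ 𝓗]
    (Ham : ℝ → 𝓗 →L[ℂ] 𝓗) (hHcont : Continuous Ham)
    (hHsa : ∀ t, IsSelfAdjoint (Ham t))
    (U U' : ℝ → 𝓗 →L[ℂ] 𝓗)
    (hU0 : U 0 = 1)
    (hUuni : ∀ t, adjoint (U t) ∘L U t = 1 ∧ U t ∘L adjoint (U t) = 1)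
    (hUderiv : ∀ t, HasDerivAt U (U' t) t)
    (hSch : ∀ t, Complex.I • U' t = Ham t ∘L U t)
    (m : ℕ) (ψ : Fin m → 𝓗) (hψ : Orthonormal ℂ ψ)
    (C : ℝ → Matrix (Fin m) (Fin m) ℂ)
    (hC : ∀ t p k, C t p k = -(inner ℂ (U t (ψ p)) (Ham t (U t (ψ k))) : ℂ))
    (V V' : ℝ → Matrix (Fin m) (Fin m) ℂ)
    (hV0 : V 0 = 1)
    (hVderiv : ∀ t p k, HasDerivAt (fun s => V s p k) (V' t p k) t)
    (hVode : ∀ t, Complex.I • V' t = C t * V t)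
    (ψtil : Fin m → ℝ → 𝓗)
    (hψtil : ∀ k t, ψtil k t = ∑ p, V t p k • U t (ψ p)) :
    ∀ t, ∀ p k, ∃ v : 𝓗,
      HasDerivAt (ψtil k) v t ∧ (inner ℂ (ψtil p t) v : ℂ) = 0 :=
  state_parallel_transport_condition_general Ham U U' hUuni hUderiv hSch m ψ hψ C hC V V' hVderiv
    hVode ψtil hψtil
end
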